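/- arXiv:1010.5411 — 7 statements merged into one kernel-verified Lean document; each statement's English description precedes it below -/
import Mathlib

section
/- For a finite group G with subgroups H₁ and H₂, the permutation representations of G on ℂ[H₁\G] and ℂ[H₂\G] are equivalent if and only if every conjugacy class of G intersects H₁ and H₂ in the same number of elements. -/
/-!
Both conditions say that the characters of the two permutation representations agree. Over `ℂ`,
finite-dimensional representations of a finite group with equal characters are equivalent: equal
characters give a nonzero intertwiner `f`, Maschke splits off `ker f` and `range f`, and induction
on dimension matches the complements. The character of `ℂ[H\G]` at `g` counts the cosets fixed by
`g`, and counting `{x | x⁻¹ g x ∈ H}` in two ways (by cosets, and by conjugates of `g`) gives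
`#Fix(g) · |H| = |H ∩ gᴳ| · |C_G(g)|`; summing over `g` recovers `|H|` from the right-hand side.
-/

open MulAction Module

namespace Subrepresentation

section Ring

variable {k G V : Type*} [CommRing k] [Monoid G] [AddCommGroup V] [Module k V]
  {ρ : Representation k G V}

noncomputable def prodEquivOfIsCompl {p q : Subrepresentation ρ}
    (h : IsCompl p.toSubmodule q.toSubmodule) :
    (p.toRepresentation.prod q.toRepresentation).Equiv ρ :=
  .mk (Submodule.prodEquivOfIsCompl _ _ h) fun g => by
    ext v <;> simp [toRepresentation]

end Ring

section Maschke

variable {k G V : Type*} [Field k] [Group G] [Finite G] [NeZero (Nat.card G : k)]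
  [AddCommGroup V] [Module k V] {ρ : Representation k G V}

lemma exists_isCompl_toSubmodule (p : Subrepresentation ρ) :
    ∃ q : Subrepresentation ρ, IsCompl p.toSubmodule q.toSubmodule := by
  obtain ⟨q, hq⟩ := ComplementedLattice.exists_isCompl p
  exact ⟨q, disjoint_iff.2 (congrArg toSubmodule hq.inf_eq_bot),
    codisjoint_iff.2 (congrArg toSubmodule hq.sup_eq_top)⟩

end Maschke

end Subrepresentation

namespace Representation

section Equivalence

variable {k G V W V' W' : Type*} [CommSemiring k] [Monoid G]
  [AddCommMonoid V] [Module k V] [AddCommMonoid W] [Module k W]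
  [AddCommMonoid V'] [Module k V'] [AddCommMonoid W'] [Module k W']
  {ρ : Representation k G V} {σ : Representation k G W}
  {ρ' : Representation k G V'} {σ' : Representation k G W'}

noncomputable def Equiv.prodCongr (φ : Equiv ρ σ) (ψ : Equiv ρ' σ') :
    Equiv (ρ.prod ρ') (σ.prod σ') :=
  .mk (φ.toLinearEquiv.prodCongr ψ.toLinearEquiv) fun g => by
    ext v <;> simp [IntertwiningMap.isIntertwining]

end Equivalence

section Ring

variable {k G V W : Type*} [CommRing k] [Monoid G]
  [AddCommGroup V] [Module k V] [AddCommGroup W] [Module k W]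
  {ρ : Representation k G V} {σ : Representation k G W}

noncomputable def IntertwiningMap.equivRangeOfIsCompl (f : IntertwiningMap ρ σ)
    {q : Subrepresentation ρ} (h : IsCompl f.ker.toSubmodule q.toSubmodule) :
    Equiv q.toRepresentation f.range.toRepresentation :=
  .mk (.ofBijective (f.toLinearMap.restrict fun v _ => LinearMap.mem_range_self _ v) ⟨by
      refine (injective_iff_map_eq_zero _).2 fun v hv => Subtype.ext ?_
      exact Submodule.disjoint_def.1 h.disjoint v (congrArg Subtype.val hv) v.2, by
      rintro ⟨_, u, rfl⟩
      obtain ⟨a, ha, b, hb, rfl⟩ :=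
        Submodule.mem_sup.1 (h.sup_eq_top ▸ Submodule.mem_top (x := u))
      refine ⟨⟨b, hb⟩, Subtype.ext ?_⟩
      simp [LinearMap.restrict_apply, (IntertwiningMap.mem_ker ρ σ f a).1 ha]⟩)
    fun g => by
      ext v
      exact IntertwiningMap.isIntertwining ρ σ f g v

end Ring

section Character

variable {k G V W : Type*} [Field k] [AddCommGroup V] [Module k V] [FiniteDimensional k V]
  [AddCommGroup W] [Module k W] [FiniteDimensional k W]

lemma char_prod [Monoid G] (ρ : Representation k G V) (σ : Representation k G W) :
    (ρ.prod σ).character = ρ.character + σ.character := by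
  ext g
  exact LinearMap.trace_prodMap' (ρ g) (σ g)

variable [CharZero k] [Group G] [Fintype G] {ρ : Representation k G V} {σ : Representation k G W}

lemma exists_intertwiningMap_ne_zero_of_character_eq [Nontrivial V]
    (h : ρ.character = σ.character) : ∃ f : IntertwiningMap ρ σ, f ≠ 0 := by
  have : Invertible (Nat.card G : k) := invertibleOfNonzero (Nat.cast_ne_zero.2 Nat.card_pos.ne')
  have hdim : finrank k (IntertwiningMap ρ σ) = finrank k (IntertwiningMap ρ ρ) := by
    apply Nat.cast_injective (R := k)
    rw [← card_inv_mul_sum_char_mul_char_eq_finrank, ← card_inv_mul_sum_char_mul_char_eq_finrank, h]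
  have hid : IntertwiningMap.id ρ ≠ 0 := by
    obtain ⟨v, hv⟩ := exists_ne (0 : V)
    exact fun h0 => hv (DFunLike.congr_fun h0 v)
  have : Nontrivial (IntertwiningMap ρ ρ) := ⟨⟨_, _, hid⟩⟩
  have : Nontrivial (IntertwiningMap ρ σ) := by
    rw [← finrank_pos_iff (R := k), hdim]
    exact finrank_pos
  exact exists_ne 0

theorem nonempty_equiv_of_character_eq (h : ρ.character = σ.character) :
    Nonempty (Equiv ρ σ) := by
  induction hn : finrank k V using Nat.strong_induction_on generalizing V W with
  | _ n ih =>
  have : NeZero (Nat.card G : k) := ⟨Nat.cast_ne_zero.2 Nat.card_pos.ne'⟩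
  rcases subsingleton_or_nontrivial V with _ | _
  · have : Subsingleton W := by
      rw [← finrank_zero_iff (R := k), ← Nat.cast_eq_zero (R := k), ← char_one σ, ← h, char_one,
        finrank_zero_of_subsingleton, Nat.cast_zero]
    exact ⟨.mk (LinearEquiv.ofSubsingleton V W) fun g => Subsingleton.elim _ _⟩
  obtain ⟨f, hf⟩ := exists_intertwiningMap_ne_zero_of_character_eq h
  obtain ⟨q, hq⟩ := f.ker.exists_isCompl_toSubmodule
  obtain ⟨q', hq'⟩ := f.range.exists_isCompl_toSubmodule
  have hchar : f.ker.toRepresentation.character = q'.toRepresentation.character := by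
    have hρ := char_iso (Subrepresentation.prodEquivOfIsCompl hq)
    have hσ := char_iso (Subrepresentation.prodEquivOfIsCompl hq'.symm)
    rw [char_prod, char_iso (f.equivRangeOfIsCompl hq)] at hρ
    rw [char_prod] at hσ
    exact add_right_cancel (hρ.trans (h.trans hσ.symm))
  have hlt : finrank k f.ker.toSubmodule < n := by
    rw [← hn]
    refine Submodule.finrank_lt fun htop => hf ?_
    exact IntertwiningMap.ext (LinearMap.ker_eq_top.1 htop)
  obtain ⟨e⟩ := ih _ hlt hchar rfl
  exact ⟨(Subrepresentation.prodEquivOfIsCompl hq).symm.trans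
    ((e.prodCongr (f.equivRangeOfIsCompl hq)).trans
      (Subrepresentation.prodEquivOfIsCompl hq'.symm))⟩

theorem nonempty_equiv_iff_character_eq : Nonempty (Equiv ρ σ) ↔ ρ.character = σ.character :=
  ⟨fun ⟨φ⟩ => char_iso φ, nonempty_equiv_of_character_eq⟩

end Character

section OfMulActionFun

variable (k G X : Type*) [CommSemiring k] [Group G] [MulAction G X]

/-- Unlike `Representation.ofMulAction`, which acts on `X →₀ k`, this acts on all of `X → k`. -/
noncomputable def ofMulActionFun : Representation k G (X → k) where
  toFun g := LinearMap.funLeft k k (g⁻¹ • ·)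
  map_one' := by ext; simp
  map_mul' g h := by ext; simp [mul_smul]

variable {k G X}

lemma ofMulActionFun_apply (g : G) (f : X → k) (x : X) :
    ofMulActionFun k G X g f x = f (g⁻¹ • x) := rfl

lemma nonempty_equiv_ofMulActionFun_iff {Y : Type*} [MulAction G Y] :
    Nonempty (Equiv (ofMulActionFun k G X) (ofMulActionFun k G Y)) ↔
      ∃ e : (X → k) ≃ₗ[k] (Y → k),
        ∀ (g : G) (f : X → k), e (fun x => f (g⁻¹ • x)) = fun y => e f (g⁻¹ • y) :=
  ⟨fun ⟨φ⟩ => ⟨φ.toLinearEquiv, φ.toIntertwiningMap.isIntertwining⟩,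
    fun ⟨e, he⟩ => ⟨.mk e fun g => LinearMap.ext (he g)⟩⟩

theorem char_ofMulActionFun {k : Type*} [Field k] [Finite X] (g : G) :
    (ofMulActionFun k G X).character g = Nat.card (fixedBy X g) := by
  classical
  have := Fintype.ofFinite X
  rw [character, LinearMap.trace_eq_matrix_trace k (Pi.basisFun k X), Matrix.trace]
  have hdiag (x : X) : (LinearMap.toMatrix (Pi.basisFun k X) (Pi.basisFun k X)
      (ofMulActionFun k G X g)).diag x = if x ∈ fixedBy X g then 1 else 0 := by
    simp only [Matrix.diag_apply, LinearMap.toMatrix_apply, Pi.basisFun_repr, Pi.basisFun_apply,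
      ofMulActionFun_apply, Pi.single_apply, inv_smul_eq_iff, mem_fixedBy, @eq_comm _ x]
  rw [Finset.sum_congr rfl fun x _ => hdiag x, Finset.sum_boole, Nat.card_eq_fintype_card,
    Fintype.card_subtype]

end OfMulActionFun

end Representation

theorem MulAction.card_smul_mem_eq {G α : Type*} [Group G] [MulAction G α] (a : α) (s : Set α) :
    Nat.card {g : G // g • a ∈ s} = Nat.card ↥(s ∩ orbit G a) * Nat.card (stabilizer G a) := by
  let e := (orbitEquivQuotientStabilizer G a).symm
  let T : Set (G ⧸ stabilizer G a) := {q | (e q : α) ∈ s}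
  have hpre : {g : G // g • a ∈ s} ≃ (QuotientGroup.mk ⁻¹' T : Set G) :=
    Equiv.subtypeEquivRight fun g => by simp [T, e, orbitEquivQuotientStabilizer_symm_apply]
  have hT : T ≃ ↥(s ∩ orbit G a) :=
    (e.subtypeEquiv fun q => Iff.rfl).trans
      ((Equiv.subtypeSubtypeEquivSubtypeInter (· ∈ orbit G a) (· ∈ s)).trans
        (Equiv.subtypeEquivRight fun b => and_comm))
  rw [Nat.card_congr (hpre.trans (QuotientGroup.preimageMkEquivSubgroupProdSet _ T)),
    Nat.card_prod, Nat.card_congr hT, mul_comm]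

namespace Subgroup

variable {G : Type*} [Group G]

theorem card_fixedBy_quotient_mul_card (H : Subgroup G) (g : G) :
    Nat.card (fixedBy (G ⧸ H) g) * Nat.card H = Nat.card {x : G // x⁻¹ * g * x ∈ H} := by
  rw [mul_comm, ← Nat.card_prod]
  refine Nat.card_congr ((QuotientGroup.preimageMkEquivSubgroupProdSet H _).symm.trans
    (Equiv.subtypeEquivRight fun x => ?_))
  rw [Set.mem_preimage, mem_fixedBy, eq_comm, MulAction.Quotient.smul_mk, QuotientGroup.eq,
    smul_eq_mul, mul_assoc]

theorem card_conj_mem_eq (H : Subgroup G) (g : G) :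
    Nat.card {x : G // x⁻¹ * g * x ∈ H} =
      Nat.card {h : G // h ∈ H ∧ IsConj g h} * Nat.card (stabilizer (ConjAct G) g) := by
  calc Nat.card {x : G // x⁻¹ * g * x ∈ H}
      = Nat.card {c : ConjAct G // c • g ∈ (H : Set G)} :=
        Nat.card_congr (((Equiv.inv G).trans ConjAct.toConjAct.toEquiv).subtypeEquiv
          fun x => by simp [ConjAct.smul_def])
    _ = _ := MulAction.card_smul_mem_eq g H
    _ = _ := by
        congr 1
        exact Nat.card_congr (Equiv.subtypeEquivRight fun h =>
          Iff.and SetLike.mem_coe (ConjAct.mem_orbit_conjAct.trans isConj_comm))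

theorem sum_card_conj_mem [Fintype G] (H : Subgroup G) :
    ∑ g : G, Nat.card {x : G // x⁻¹ * g * x ∈ H} = Nat.card G * Nat.card H := by
  rw [← Nat.card_sigma, ← Nat.card_prod]
  exact Nat.card_congr
    { toFun := fun p => (p.2.1, ⟨_, p.2.2⟩)
      invFun := fun p => ⟨p.1 * p.2 * p.1⁻¹, p.1, by simp [mul_assoc]⟩
      left_inv := fun ⟨g, x, hx⟩ => Sigma.subtype_ext (by group) rfl
      right_inv := fun ⟨x, h⟩ => Prod.ext rfl (Subtype.ext (by group)) }

theorem card_fixedBy_quotient_eq_iff [Fintype G] (H₁ H₂ : Subgroup G) :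
    (∀ g : G, Nat.card (fixedBy (G ⧸ H₁) g) = Nat.card (fixedBy (G ⧸ H₂) g)) ↔
      ∀ g : G, Nat.card {h : G // h ∈ H₁ ∧ IsConj g h} =
        Nat.card {h : G // h ∈ H₂ ∧ IsConj g h} := by
  constructor
  · intro hfix g
    have hcard : Nat.card H₁ = Nat.card H₂ := by
      have hindex := hfix 1
      rw [fixedBy_one_eq_univ, fixedBy_one_eq_univ, Nat.card_univ, Nat.card_univ] at hindex
      refine Nat.eq_of_mul_eq_mul_left (Nat.card_pos (α := G ⧸ H₁)) ?_
      rw [← card_eq_card_quotient_mul_card_subgroup, hindex,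
        ← card_eq_card_quotient_mul_card_subgroup]
    refine Nat.eq_of_mul_eq_mul_right (Nat.card_pos (α := stabilizer (ConjAct G) g)) ?_
    rw [← card_conj_mem_eq, ← card_conj_mem_eq, ← card_fixedBy_quotient_mul_card,
      ← card_fixedBy_quotient_mul_card, hfix g, hcard]
  · intro hconj
    have hconj_mem (g : G) :
        Nat.card {x : G // x⁻¹ * g * x ∈ H₁} = Nat.card {x : G // x⁻¹ * g * x ∈ H₂} := by
      rw [card_conj_mem_eq, card_conj_mem_eq, hconj g]
    have hcard : Nat.card H₁ = Nat.card H₂ := by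
      refine Nat.eq_of_mul_eq_mul_left (Nat.card_pos (α := G)) ?_
      rw [← sum_card_conj_mem, ← sum_card_conj_mem]
      exact Finset.sum_congr rfl fun g _ => hconj_mem g
    intro g
    refine Nat.eq_of_mul_eq_mul_right (Nat.card_pos (α := H₁)) ?_
    rw [card_fixedBy_quotient_mul_card, hcard, card_fixedBy_quotient_mul_card, hconj_mem g]

end Subgroup

/-- For a finite group `G` with subgroups `H₁` and `H₂`, the permutation
representations of `G` on `ℂ[H₁\G]` and `ℂ[H₂\G]` (modeled as the spaces of complex-valued
functions on the coset spaces, with the natural `G`-action) are equivalent if and only if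
every conjugacy class of `G` intersects `H₁` and `H₂` in the same number of elements. -/
theorem gassmann_iff_perm_rep_equiv (G : Type) [Group G] [Fintype G]
    (H₁ H₂ : Subgroup G) :
    (∃ e : (G ⧸ H₁ → ℂ) ≃ₗ[ℂ] (G ⧸ H₂ → ℂ),
      ∀ (g : G) (f : G ⧸ H₁ → ℂ),
        e (fun x => f (g⁻¹ • x)) = fun x => e f (g⁻¹ • x)) ↔
    (∀ g : G, Nat.card {h : G // h ∈ H₁ ∧ IsConj g h}
            = Nat.card {h : G // h ∈ H₂ ∧ IsConj g h}) := by
  rw [← Representation.nonempty_equiv_ofMulActionFun_iff,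
    Representation.nonempty_equiv_iff_character_eq, ← Subgroup.card_fixedBy_quotient_eq_iff,
    funext_iff]
  simp only [Representation.char_ofMulActionFun, Nat.cast_inj]
end

section
/- For a finite group G with subgroups H₁ and H₂, every conjugacy class of G intersects H₁ and H₂ in the same number of elements if and only if for every finite-dimensional complex representation V of G, the dimensions of the invariant subspaces V^{H₁} and V^{H₂} are equal. -/
/-!
If every conjugacy class meets `H₁` and `H₂` in equally many elements, there is a bijection
`H₁ ≃ H₂` that preserves conjugacy classes; since `dim V^H = |H|⁻¹ ∑_{h ∈ H} χ_V(h)` and characters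
are class functions, the two dimensions agree.

Conversely, fix `g` and let `T` be left translation by `g⁻¹` on `ℂ[G] = G → ℂ`. With `ζ` a
primitive `|G|`-th root of unity, the eigenprojections `e_q = |G|⁻¹ ∑_a ζ^(q a) T^a` of `T` commute
with the right regular representation, so their ranges `W_q` are subrepresentations with
`dim W_q^H = tr(e_q ∘ avg_H)`. Fourier inversion `∑_q ζ^q e_q = T⁻¹ = λ(g)` turns these
dimensions into `tr(λ(g) ∘ avg_H) = |C_G(g)| · |g^G ∩ H| / |H|`, the permutation character of `G`
on `G/H`.
Equal invariant dimensions thus give `|g^G ∩ H₁| / |H₁| = |g^G ∩ H₂| / |H₂|` for all `g`, and at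
`g = 1` this says `|H₁| = |H₂|`.
-/

open Finset Module LinearMap Representation TannakaDuality.FiniteGroup

universe u

theorem LinearMap.IsIdempotentElem.range_mul_of_commute {R M : Type*} [Ring R] [AddCommGroup M]
    [Module R M] {p q : Module.End R M} (hp : IsIdempotentElem p) (hq : IsIdempotentElem q)
    (hpq : Commute p q) : range (p * q) = range p ⊓ range q := by
  refine le_antisymm (le_inf ?_ ?_) fun v ⟨hvp, hvq⟩ => ⟨v, ?_⟩
  · exact range_comp_le_range q p
  · rw [hpq.eq]
    exact range_comp_le_range p q
  · rw [Module.End.mul_apply, hq.mem_range_iff.1 hvq, hp.mem_range_iff.1 hvp]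

theorem LinearMap.trace_funLeft {R ι : Type*} [CommRing R] [Fintype ι] [DecidableEq ι]
    (σ : ι → ι) : trace R (ι → R) (funLeft R R σ) = #{i | σ i = i} := by
  rw [trace_eq_matrix_trace R (Pi.basisFun R ι), Matrix.trace, ← sum_boole]
  refine sum_congr rfl fun i _ => ?_
  simp [Pi.single_apply]

namespace Representation

variable {k G V : Type*} [Field k] [Group G] [AddCommGroup V] [Module k V]

theorem character_eq_of_isConj (ρ : Representation k G V) {a b : G} (h : IsConj a b) :
    ρ.character a = ρ.character b := by
  obtain ⟨c, rfl⟩ := isConj_iff.1 h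
  exact (ρ.char_conj a c).symm

theorem averageMap_eq_smul_sum (ρ : Representation k G V) [Fintype G]
    [Invertible (Fintype.card G : k)] : ρ.averageMap = ⅟(Fintype.card G : k) • ∑ g, ρ g := by
  simp [averageMap, GroupAlgebra.average, map_sum]

end Representation

namespace Subrepresentation

variable {k G K V : Type*} [Field k] [Group G] [Group K] [AddCommGroup V] [Module k V]
  {ρ : Representation k G V}

def range (p : Module.End k V) (hp : ∀ g, Commute p (ρ g)) : Subrepresentation ρ where
  toSubmodule := LinearMap.range p
  apply_mem_toSubmodule g := by
    rintro _ ⟨v, rfl⟩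
    exact ⟨ρ g v, by rw [← Module.End.mul_apply, (hp g).eq, Module.End.mul_apply]⟩

theorem map_subtype_invariants_comp (W : Subrepresentation ρ) (f : K →* G) :
    (invariants (W.toRepresentation.comp f)).map W.toSubmodule.subtype
      = W.toSubmodule ⊓ invariants (ρ.comp f) := by
  ext v
  simp only [Submodule.mem_map, Submodule.mem_inf, mem_invariants]
  constructor
  · rintro ⟨w, hw, rfl⟩
    exact ⟨w.2, fun x => congrArg Subtype.val (hw x)⟩
  · rintro ⟨hv, hinv⟩
    exact ⟨⟨v, hv⟩, fun x => Subtype.ext (hinv x), rfl⟩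

theorem finrank_invariants_range_comp [Fintype K] [Invertible (Fintype.card K : k)]
    [FiniteDimensional k V] (f : K →* G) {p : Module.End k V} (hp : IsIdempotentElem p)
    (hpρ : ∀ g, Commute p (ρ g)) :
    (finrank k (invariants ((range p hpρ).toRepresentation.comp f)) : k)
      = trace k V (p * averageMap (ρ.comp f)) := by
  have havg := isProj_averageMap (ρ.comp f)
  have hcomm : Commute p (averageMap (ρ.comp f)) := by
    rw [averageMap_eq_smul_sum]
    exact (Commute.sum_right _ _ _ fun x _ => hpρ (f x)).smul_right _
  rw [(IsIdempotentElem.isProj_range _ (hp.mul_of_commute hcomm havg.isIdempotentElem)).trace,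
    hp.range_mul_of_commute havg.isIdempotentElem hcomm, havg.range,
    ← Submodule.finrank_map_subtype_eq, map_subtype_invariants_comp]
  rfl

end Subrepresentation

abbrev invertibleFintypeCard (k K : Type*) [DivisionRing k] [CharZero k] [Fintype K] [Nonempty K] :
    Invertible (Fintype.card K : k) :=
  invertibleOfNonzero (Nat.cast_ne_zero.2 Fintype.card_ne_zero)

attribute [local instance] invertibleFintypeCard

theorem Representation.finrank_invariants_comp_subtype_eq_of_equiv {k G V : Type*} [Field k]
    [CharZero k] [Group G] [AddCommGroup V] [Module k V] [FiniteDimensional k V]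
    (ρ : Representation k G V) {H₁ H₂ : Subgroup G} [Fintype H₁] [Fintype H₂] (e : H₁ ≃ H₂)
    (he : ∀ h : H₁, IsConj (h : G) (e h)) :
    finrank k (invariants (ρ.comp H₁.subtype)) = finrank k (invariants (ρ.comp H₂.subtype)) := by
  apply Nat.cast_injective (R := k)
  simp only [← (isProj_averageMap _).trace, averageMap_eq_smul_sum, map_smul, map_sum,
    invOf_eq_inv, smul_eq_mul, Fintype.card_congr e]
  congr 1
  exact Fintype.sum_equiv e _ _ fun h => ρ.character_eq_of_isConj (he h)

namespace Gassmann

section Fourier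

variable {k A : Type*} [Field k] [Ring A] [Algebra k A]

theorem _root_.IsPrimitiveRoot.sum_pow_pow_eq {ζ : k} {n : ℕ} (hζ : IsPrimitiveRoot ζ n) (m : ℕ) :
    ∑ q ∈ range n, (ζ ^ m) ^ q = if n ∣ m then (n : k) else 0 := by
  split_ifs with hm
  · simp [(hζ.pow_eq_one_iff_dvd m).2 hm]
  · rw [geom_sum_eq (mt (hζ.pow_eq_one_iff_dvd m).1 hm), ← pow_mul, pow_mul', hζ.pow_eq_one,
      one_pow, sub_self, zero_div]

/-- The projection onto the `ζ⁻¹ ^ q`-eigenspace of `T` when `T ^ n = 1`. -/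
def eigenProj (ζ : k) (n : ℕ) (T : A) (q : ℕ) : A :=
  (n : k)⁻¹ • ∑ a ∈ range n, ζ ^ (q * a) • T ^ a

variable {ζ : k} {n : ℕ} {T : A}

theorem smul_eigenProj_mul (hζ : ζ ^ n = 1) (hT : T ^ n = 1) (q : ℕ) :
    ζ ^ q • (eigenProj ζ n T q * T) = eigenProj ζ n T q := by
  set F : ℕ → A := fun a => ζ ^ (q * a) • T ^ a
  have hperiodic : F n = F 0 := by simp [F, pow_mul', hζ, hT]
  have hshift : ∑ a ∈ range n, F (a + 1) = ∑ a ∈ range n, F a := by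
    have h := sum_range_succ F n
    rw [sum_range_succ', hperiodic] at h
    exact add_right_cancel h
  conv_rhs => rw [eigenProj, ← hshift]
  rw [eigenProj, smul_mul_assoc, smul_comm, sum_mul, smul_sum]
  congr 1
  refine sum_congr rfl fun a _ => ?_
  rw [smul_mul_assoc, smul_smul, ← pow_succ, ← pow_add, add_comm, ← mul_add_one]

theorem smul_eigenProj_mul_pow (hζ : ζ ^ n = 1) (hT : T ^ n = 1) (q a : ℕ) :
    ζ ^ (q * a) • (eigenProj ζ n T q * T ^ a) = eigenProj ζ n T q := by
  induction a with
  | zero => simp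
  | succ a ih =>
    rw [pow_succ, ← mul_assoc, mul_add, mul_one, pow_add, mul_smul, smul_comm, ← smul_mul_assoc,
      ih, smul_eigenProj_mul hζ hT]

theorem isIdempotentElem_eigenProj [NeZero n] (hζ : IsPrimitiveRoot ζ n) (hT : T ^ n = 1)
    (q : ℕ) : IsIdempotentElem (eigenProj ζ n T q) := by
  have : NeZero (n : k) := hζ.neZero'
  rw [IsIdempotentElem]
  conv_lhs => enter [2]; rw [eigenProj]
  rw [mul_smul_comm, mul_sum]
  simp_rw [mul_smul_comm, smul_eigenProj_mul_pow hζ.pow_eq_one hT, sum_const, card_range,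
    ← Nat.cast_smul_eq_nsmul k, smul_smul, inv_mul_cancel₀ (NeZero.ne _), one_smul]

theorem Commute.eigenProj {S : A} (h : Commute T S) (q : ℕ) : Commute (eigenProj ζ n T q) S :=
  ((Commute.sum_left _ _ _ fun a _ => (h.pow_left a).smul_left _).smul_left _)

theorem sum_pow_smul_eigenProj [NeZero n] (hζ : IsPrimitiveRoot ζ n) :
    ∑ q ∈ range n, ζ ^ q • eigenProj ζ n T q = T ^ (n - 1) := by
  have : NeZero (n : k) := hζ.neZero'
  have hcoeff (a : ℕ) (ha : a ∈ range n) :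
      ∑ q ∈ range n, ζ ^ q * ζ ^ (q * a) = if a = n - 1 then (n : k) else 0 := by
    have hdvd : n ∣ a + 1 ↔ a = n - 1 := by
      have := mem_range.1 ha
      constructor
      · intro h
        have := Nat.le_of_dvd a.succ_pos h
        omega
      · rintro rfl
        rw [Nat.sub_add_cancel NeZero.one_le]
    simp_rw [← pow_add, ← mul_one_add, pow_mul', add_comm 1, hζ.sum_pow_pow_eq, hdvd]
  calc ∑ q ∈ range n, ζ ^ q • eigenProj ζ n T q
      = (n : k)⁻¹ • ∑ a ∈ range n, (∑ q ∈ range n, ζ ^ q * ζ ^ (q * a)) • T ^ a := by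
        simp only [eigenProj, smul_sum, sum_smul, smul_smul, mul_left_comm _ (n : k)⁻¹]
        exact sum_comm
    _ = T ^ (n - 1) := by
        rw [sum_congr rfl fun a ha => by rw [hcoeff a ha, ite_smul, zero_smul], sum_ite_eq',
          if_pos (mem_range.2 (Nat.sub_one_lt (NeZero.ne n))), smul_smul,
          inv_mul_cancel₀ (NeZero.ne _), one_smul]

end Fourier

section Counting

variable {G : Type*} [Group G]

noncomputable def conjCount (H : Subgroup G) (g : G) : ℕ := Nat.card {h : G // h ∈ H ∧ IsConj g h}

theorem conjCount_one (H : Subgroup G) : conjCount H 1 = 1 := by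
  simp only [conjCount, isConj_one_right]
  exact Nat.card_eq_one_iff_unique.2
    ⟨⟨fun a b => Subtype.ext (a.2.2.trans b.2.2.symm)⟩, ⟨⟨1, H.one_mem, rfl⟩⟩⟩

theorem exists_equiv_isConj_of_conjCount_eq [Finite G] {H₁ H₂ : Subgroup G}
    (h : ∀ g, conjCount H₁ g = conjCount H₂ g) : ∃ e : H₁ ≃ H₂, ∀ x : H₁, IsConj (x : G) (e x) := by
  have hfibre (H : Subgroup G) (g : G) :
      Nat.card {x : H // ConjClasses.mk (x : G) = ConjClasses.mk g} = conjCount H g :=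
    Nat.card_congr <|
      (Equiv.subtypeSubtypeEquivSubtypeInter (· ∈ H) (ConjClasses.mk · = ConjClasses.mk g)).trans <|
        Equiv.subtypeEquivRight fun x => by rw [ConjClasses.mk_eq_mk_iff_isConj, isConj_comm]
  have hequiv (c : ConjClasses G) : Nonempty
      ({x : H₁ // ConjClasses.mk (x : G) = c} ≃ {x : H₂ // ConjClasses.mk (x : G) = c}) := by
    obtain ⟨g, rfl⟩ := ConjClasses.mk_surjective c
    exact Finite.card_eq.1 (by rw [hfibre, hfibre, h])
  exact ⟨Equiv.ofFiberEquiv fun c => (hequiv c).some, fun x =>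
    ConjClasses.mk_eq_mk_iff_isConj.1 (Equiv.ofFiberEquiv_map (fun c => (hequiv c).some) x).symm⟩

variable [Fintype G] [DecidableEq G]

theorem card_conj_eq_of_isConj {g h : G} (hgh : IsConj g h) :
    #{t | t⁻¹ * g * t = h} = #{t | t⁻¹ * g * t = g} := by
  obtain ⟨c, rfl⟩ := isConj_iff.1 hgh
  refine card_equiv (Equiv.mulRight c) fun t => ?_
  simp only [mem_filter, mem_univ, true_and, Equiv.coe_mulRight]
  rw [show (t * c)⁻¹ * g * (t * c) = c⁻¹ * (t⁻¹ * g * t) * c by group]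
  constructor
  · intro h
    rw [h]
    group
  · intro h
    calc t⁻¹ * g * t = c * (c⁻¹ * (t⁻¹ * g * t) * c) * c⁻¹ := by group
      _ = c * g * c⁻¹ := by rw [h]

theorem sum_card_conj_eq (H : Subgroup G) [Fintype H] (g : G) :
    ∑ h : H, #{t | t⁻¹ * g * t = h} = #{t | t⁻¹ * g * t = g} * conjCount H g := by
  classical
  have hconjCount : conjCount H g = #{h : H | IsConj g h} := by
    rw [← Fintype.card_subtype, ← Nat.card_eq_fintype_card]
    exact Nat.card_congr (Equiv.subtypeSubtypeEquivSubtypeInter (· ∈ H) (IsConj g)).symm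
  calc ∑ h : H, #{t | t⁻¹ * g * t = h}
      = ∑ h : H, if IsConj g h then #{t | t⁻¹ * g * t = g} else 0 := by
        refine sum_congr rfl fun h _ => ?_
        split_ifs with hgh
        · exact card_conj_eq_of_isConj hgh
        · refine card_eq_zero.2 (filter_eq_empty_iff.2 fun t _ ht => hgh ?_)
          exact isConj_iff.2 ⟨t⁻¹, by rw [← ht]; group⟩
    _ = #{t | t⁻¹ * g * t = g} * conjCount H g := by
        rw [sum_ite, sum_const_zero, add_zero, sum_const, smul_eq_mul, mul_comm, hconjCount]

end Counting

section Regular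

variable {k G : Type u} [Field k] [Group G]

theorem leftRegular_mul_rightRegular (g h : G) :
    leftRegular (k := k) g * rightRegular h = funLeft k k fun t => g⁻¹ * t * h :=
  rfl

theorem commute_leftRegular_rightRegular (g h : G) :
    Commute (leftRegular (k := k) g) (rightRegular h) :=
  LinearMap.ext fun f => funext fun t => by simp [mul_assoc]

variable [Fintype G] [DecidableEq G]

theorem trace_leftRegular_mul_averageMap (H : Subgroup G) [Fintype H]
    [Invertible (Fintype.card H : k)] (g : G) :
    trace k (G → k)
        (leftRegular g * averageMap (rightRegular.comp H.subtype : Representation k H (G → k)))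
      = ⅟(Fintype.card H : k) * (#{t | t⁻¹ * g * t = g} * conjCount H g) := by
  have hfix (h : G) (t : G) : g⁻¹ * t * h = t ↔ t⁻¹ * g * t = h := by
    rw [mul_assoc, mul_assoc, inv_mul_eq_iff_eq_mul, inv_mul_eq_iff_eq_mul, eq_comm]
  rw [averageMap_eq_smul_sum, mul_smul_comm, mul_sum, map_smul, map_sum, smul_eq_mul]
  congr 1
  rw [← Nat.cast_mul, ← sum_card_conj_eq, Nat.cast_sum]
  refine sum_congr rfl fun h _ => ?_
  rw [MonoidHom.comp_apply, leftRegular_mul_rightRegular, trace_funLeft]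
  simp only [Subgroup.coe_subtype, hfix]

end Regular

section Backward

variable {G : Type} [Group G] [Fintype G] [DecidableEq G] {H₁ H₂ : Subgroup G}
  [Fintype H₁] [Fintype H₂]

theorem inv_card_mul_conjCount_eq_of_finrank_eq
    (hdim : ∀ (V : Type) [AddCommGroup V] [Module ℂ V] [FiniteDimensional ℂ V]
        (ρ : Representation ℂ G V),
      finrank ℂ (invariants (ρ.comp H₁.subtype)) = finrank ℂ (invariants (ρ.comp H₂.subtype)))
    (g : G) :
    (Fintype.card H₁ : ℂ)⁻¹ * conjCount H₁ g = (Fintype.card H₂ : ℂ)⁻¹ * conjCount H₂ g := by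
  set n := Fintype.card G
  obtain ⟨ζ, hζ⟩ : ∃ ζ : ℂ, IsPrimitiveRoot ζ n :=
    ⟨_, Complex.isPrimitiveRoot_exp n Fintype.card_ne_zero⟩
  set T : Module.End ℂ (G → ℂ) := leftRegular g⁻¹
  have hT : T ^ n = 1 := by rw [← map_pow, pow_card_eq_one, map_one]
  have hTinv : T ^ (n - 1) = leftRegular g := by
    have : g⁻¹ ^ (n - 1) * g⁻¹ = 1 := by
      rw [pow_sub_one_mul Fintype.card_ne_zero, pow_card_eq_one]
    rw [← map_pow, eq_inv_of_mul_eq_one_left this, inv_inv]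
  have hcomm (q : ℕ) (y : G) : Commute (eigenProj ζ n T q) (rightRegular y) :=
    Commute.eigenProj (commute_leftRegular_rightRegular g⁻¹ y) q
  let W (q : ℕ) := Subrepresentation.range (eigenProj ζ n T q) (hcomm q)
  -- Both sides are `tr(λ(g) ∘ avg_H)`: count fixed points, or expand `λ(g) = ∑ ζ^q e_q`.
  have key (H : Subgroup G) [Fintype H] :
      (Fintype.card H : ℂ)⁻¹ * (#{t | t⁻¹ * g * t = g} * conjCount H g)
        = ∑ q ∈ range n,
            ζ ^ q * finrank ℂ (invariants ((W q).toRepresentation.comp H.subtype)) := by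
    simp_rw [W,
      Subrepresentation.finrank_invariants_range_comp _ (isIdempotentElem_eigenProj hζ hT _)]
    rw [← invOf_eq_inv, ← trace_leftRegular_mul_averageMap, ← hTinv, ← sum_pow_smul_eigenProj hζ,
      sum_mul, map_sum]
    simp only [smul_mul_assoc, map_smul, smul_eq_mul]
  have h := key H₁
  simp_rw [hdim] at h
  rw [← key H₂, mul_left_comm, mul_left_comm _ (#{t | t⁻¹ * g * t = g} : ℂ)] at h
  exact mul_left_cancel₀ (Nat.cast_ne_zero.2 (card_ne_zero.2 ⟨1, by simp⟩)) h

theorem conjCount_eq_of_finrank_eq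
    (hdim : ∀ (V : Type) [AddCommGroup V] [Module ℂ V] [FiniteDimensional ℂ V]
        (ρ : Representation ℂ G V),
      finrank ℂ (invariants (ρ.comp H₁.subtype)) = finrank ℂ (invariants (ρ.comp H₂.subtype)))
    (g : G) : conjCount H₁ g = conjCount H₂ g := by
  have hcard := inv_card_mul_conjCount_eq_of_finrank_eq hdim 1
  simp only [conjCount_one, Nat.cast_one, mul_one] at hcard
  have h := inv_card_mul_conjCount_eq_of_finrank_eq hdim g
  rw [hcard] at h
  exact_mod_cast mul_left_cancel₀ (inv_ne_zero (Nat.cast_ne_zero.2 Fintype.card_ne_zero)) h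

end Backward

end Gassmann

/-- For a finite group `G` with subgroups `H₁` and `H₂`, every conjugacy class
of `G` intersects `H₁` and `H₂` in the same number of elements if and only if for every
finite-dimensional complex representation `V` of `G`, the dimensions of the invariant
subspaces `V^{H₁}` and `V^{H₂}` are equal. -/
theorem gassmann_iff_invariant_dims_eq (G : Type) [Group G] [Fintype G]
    (H₁ H₂ : Subgroup G) :
    (∀ g : G, Nat.card {h : G // h ∈ H₁ ∧ IsConj g h}
            = Nat.card {h : G // h ∈ H₂ ∧ IsConj g h}) ↔
    (∀ (V : Type) [AddCommGroup V] [Module ℂ V] [FiniteDimensional ℂ V]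
        (ρ : Representation ℂ G V),
      Module.finrank ℂ (Representation.invariants (ρ.comp H₁.subtype : Representation ℂ H₁ V))
        = Module.finrank ℂ (Representation.invariants (ρ.comp H₂.subtype : Representation ℂ H₂ V))) := by
  classical
  refine ⟨fun hcount V _ _ _ ρ => ?_, fun hdim g => Gassmann.conjCount_eq_of_finrank_eq hdim g⟩
  obtain ⟨e, he⟩ := Gassmann.exists_equiv_isConj_of_conjCount_eq hcount
  exact ρ.finrank_invariants_comp_subtype_eq_of_equiv e he
end

section
/- If H₁ and H₂ are abstract finite groups of the same cardinality d such that for every natural number n the number of elements of order n in H₁ equals that in H₂, then, embedding H₁ and H₂ into the symmetric group S_d via their left regular representations, every conjugacy class of S_d intersects the images of H₁ and H₂ in the same number of elements. -/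
/-!
The left regular permutation of an element `g` of order `n` moves every point in a cycle of
length exactly `n`, so its cycle type is `d / n` cycles of length `n`; in particular its
conjugacy class in `S_d` depends only on `n`. Equal order statistics give an order-preserving
bijection `H₁ ≃ H₂`, which therefore matches the regular permutations lying in any given
conjugacy class.
-/

namespace Equiv.Perm

def IsSemiregular {α : Type*} (g : Perm α) : Prop :=
  ∀ (k : ℕ) (x : α), (g ^ k) x = x → g ^ k = 1

variable {α : Type*} [Fintype α] [DecidableEq α] {g : Perm α}

theorem IsSemiregular.orderOf_cycleOf (hg : g.IsSemiregular) (x : α) :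
    orderOf (g.cycleOf x) = orderOf g := by
  refine Nat.dvd_antisymm (orderOf_cycleOf_dvd_orderOf g x)
    (orderOf_dvd_of_pow_eq_one (hg _ x ?_))
  rw [← cycleOf_pow_apply_self, pow_orderOf_eq_one, one_apply]

theorem IsSemiregular.partition_parts (hg : g.IsSemiregular) :
    g.partition.parts = Multiset.replicate (Fintype.card α / orderOf g) (orderOf g) := by
  have hparts : ∀ m ∈ g.partition.parts, m = orderOf g := by
    intro m hm
    rw [parts_partition, Multiset.mem_add] at hm
    rcases hm with hm | hm
    · obtain ⟨c, hc, rfl⟩ := Multiset.mem_map.mp ((cycleType_def g) ▸ hm)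
      have hcyc := (mem_cycleFactorsFinset_iff.mp hc).1
      obtain ⟨x, hx, -⟩ := id hcyc
      rw [Function.comp_apply, ← hcyc.orderOf, cycle_is_cycleOf (mem_support.mpr hx) hc,
        hg.orderOf_cycleOf]
    · obtain ⟨hpos, rfl⟩ := Multiset.mem_replicate.mp hm
      obtain ⟨x, -, hx⟩ := Finset.exists_mem_notMem_of_card_lt_card
        (Nat.lt_of_sub_pos (Nat.pos_of_ne_zero hpos) : g.support.card < Finset.univ.card)
      have hg1 : g = 1 := by simpa using hg 1 x (by simpa using hx)
      rw [hg1, orderOf_one]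
  have hsum := g.partition.parts_sum
  rw [Multiset.eq_replicate_of_mem hparts, Multiset.sum_replicate, smul_eq_mul] at hsum
  rw [Multiset.eq_replicate_of_mem hparts, Nat.div_eq_of_eq_mul_left (orderOf_pos g) hsum.symm]

theorem IsSemiregular.isConj {g₁ g₂ : Perm α} (hg₁ : g₁.IsSemiregular) (hg₂ : g₂.IsSemiregular)
    (h : orderOf g₁ = orderOf g₂) : IsConj g₁ g₂ := by
  rw [partition_eq_of_isConj, Nat.Partition.ext_iff, hg₁.partition_parts, hg₂.partition_parts, h]

end Equiv.Perm

open Equiv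

def leftRegular {G α : Type*} [Group G] (e : G ≃ α) : G →* Perm α :=
  e.permCongrHom.toMonoidHom.comp (MulAction.toPermHom G G)

section leftRegular

variable {G α : Type*} [Group G] (e : G ≃ α)

theorem leftRegular_eq (g : G) : leftRegular e g = (e.symm.trans (Equiv.mulLeft g)).trans e := rfl

@[simp]
theorem leftRegular_apply (g : G) (x : α) : leftRegular e g x = e (g * e.symm x) := rfl

theorem leftRegular_injective : Function.Injective (leftRegular e) := by
  intro g₁ g₂ h
  simpa using congrArg (fun π => π (e 1)) h

theorem orderOf_leftRegular (g : G) : orderOf (leftRegular e g) = orderOf g :=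
  orderOf_injective _ (leftRegular_injective e) g

theorem isSemiregular_leftRegular (g : G) : (leftRegular e g).IsSemiregular := by
  intro k x hx
  rw [← map_pow] at hx ⊢
  have hk : g ^ k = 1 := mul_eq_right.mp (e.injective (hx.trans (e.apply_symm_apply x).symm))
  rw [hk, map_one]

theorem isConj_leftRegular [Fintype α] [DecidableEq α] {G' : Type*} [Group G'] (e' : G' ≃ α)
    {g : G} {g' : G'} (h : orderOf g = orderOf g') :
    IsConj (leftRegular e g) (leftRegular e' g') :=
  (isSemiregular_leftRegular e g).isConj (isSemiregular_leftRegular e' g')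
    (by rw [orderOf_leftRegular, orderOf_leftRegular, h])

end leftRegular

theorem exists_equiv_comp_eq_of_card_fiber_eq {α β γ : Type*} [Finite α] [Finite β]
    {f : α → γ} {g : β → γ} (h : ∀ c, Nat.card {a // f a = c} = Nat.card {b // g b = c}) :
    ∃ Φ : α ≃ β, ∀ a, g (Φ a) = f a :=
  ⟨Equiv.ofFiberEquiv fun c => (Finite.card_eq.mp (h c)).some, Equiv.ofFiberEquiv_map _⟩

theorem Nat.card_subtype_exists_eq_and {α β : Type*} {F : α → β} (hF : Function.Injective F)
    (P : β → Prop) : Nat.card {b // (∃ a, b = F a) ∧ P b} = Nat.card {a // P (F a)} := by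
  refine (Nat.card_eq_of_bijective (fun a => ⟨F a, ⟨a, rfl⟩, a.2⟩) ⟨?_, ?_⟩).symm
  · exact fun a₁ a₂ h => Subtype.ext (hF (congrArg Subtype.val h))
  · rintro ⟨_, ⟨a, rfl⟩, ha⟩
    exact ⟨⟨a, ha⟩, rfl⟩

theorem regular_embeddings_gassmann_general (d : ℕ)
    (H₁ H₂ : Type) [Group H₁] [Group H₂]
    (horder : ∀ n : ℕ, Nat.card {h : H₁ // orderOf h = n}
                     = Nat.card {h : H₂ // orderOf h = n})
    (e₁ : H₁ ≃ Fin d) (e₂ : H₂ ≃ Fin d) :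
    ∀ σ : Equiv.Perm (Fin d),
      Nat.card {π : Equiv.Perm (Fin d) //
          (∃ h : H₁, π = (e₁.symm.trans (Equiv.mulLeft h)).trans e₁) ∧ IsConj σ π}
      = Nat.card {π : Equiv.Perm (Fin d) //
          (∃ h : H₂, π = (e₂.symm.trans (Equiv.mulLeft h)).trans e₂) ∧ IsConj σ π} := by
  intro σ
  have := Finite.of_equiv _ e₁.symm
  have := Finite.of_equiv _ e₂.symm
  obtain ⟨Φ, hΦ⟩ := exists_equiv_comp_eq_of_card_fiber_eq horder
  simp only [← leftRegular_eq]
  rw [Nat.card_subtype_exists_eq_and (leftRegular_injective e₁),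
    Nat.card_subtype_exists_eq_and (leftRegular_injective e₂)]
  refine Nat.card_congr (Φ.subtypeEquiv fun h => ?_)
  have hconj : IsConj (leftRegular e₁ h) (leftRegular e₂ (Φ h)) :=
    isConj_leftRegular e₁ e₂ (hΦ h).symm
  exact ⟨fun hσ => hσ.trans hconj, fun hσ => hσ.trans hconj.symm⟩

/-- If `H₁` and `H₂` are abstract finite groups of the same cardinality `d`
such that for every natural number `n` the number of elements of order `n` in `H₁` equals
that in `H₂`, then, embedding `H₁` and `H₂` into the symmetric group `S_d = Perm (Fin d)`
via their left regular representations (after choosing bijections `Hᵢ ≃ Fin d`), every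
conjugacy class of `S_d` intersects the images of `H₁` and `H₂` in the same number of
elements. -/
theorem regular_embeddings_gassmann (d : ℕ)
    (H₁ H₂ : Type) [Group H₁] [Group H₂] [Fintype H₁] [Fintype H₂]
    (hc₁ : Nat.card H₁ = d) (hc₂ : Nat.card H₂ = d)
    (horder : ∀ n : ℕ, Nat.card {h : H₁ // orderOf h = n}
                     = Nat.card {h : H₂ // orderOf h = n})
    (e₁ : H₁ ≃ Fin d) (e₂ : H₂ ≃ Fin d) :
    ∀ σ : Equiv.Perm (Fin d),
      Nat.card {π : Equiv.Perm (Fin d) //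
          (∃ h : H₁, π = (e₁.symm.trans (Equiv.mulLeft h)).trans e₁) ∧ IsConj σ π}
      = Nat.card {π : Equiv.Perm (Fin d) //
          (∃ h : H₂, π = (e₂.symm.trans (Equiv.mulLeft h)).trans e₂) ∧ IsConj σ π} :=
  regular_embeddings_gassmann_general d H₁ H₂ horder e₁ e₂
end

section
/- Let (G, H₁, H₂) satisfy the Gassmann condition and let σ ∈ G. Then the permutation of H₁\G induced by right multiplication by σ and the permutation of H₂\G induced by right multiplication by σ have, for each n ≥ 1, the same number of orbits (cycles) of length n. -/
/-!
Write `π_H(τ)` for the number of cosets in `G ⧸ H` fixed by `τ`. Counting the elements of the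
fixed cosets gives `π_H(τ) * |H| = #{g | g⁻¹ τ g ∈ H} = |H ∩ τ^G| * |C_G(τ)|`, and `|H|` is the
sum of `|H ∩ c|` over the conjugacy classes `c`, so the Gassmann condition forces
`π_{H₁} = π_{H₂}`. A point is fixed by `σ ^ k` iff the length of its `σ`-cycle divides `k`, so
`π_H(σ ^ k) = ∑_{d ∣ k} d * c_d(H)` with `c_d(H)` the number of cycles of length `d`; Möbius
inversion recovers the `c_d` from these fixed-point counts.
-/

open MulAction Subgroup

theorem Nat.eq_of_sum_divisors_eq {R : Type*} [AddCommGroup R] {f₁ f₂ : ℕ → R}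
    (h : ∀ n ≠ 0, ∑ d ∈ n.divisors, f₁ d = ∑ d ∈ n.divisors, f₂ d) {n : ℕ} (hn : n ≠ 0) :
    f₁ n = f₂ n := by
  have inversion := fun f => (ArithmeticFunction.sum_eq_iff_sum_smul_moebius_eq (f := f)
    (g := fun n => ∑ d ∈ n.divisors, f₁ d)).mp
  rw [← inversion f₁ (fun _ _ => rfl) n (Nat.pos_of_ne_zero hn),
    ← inversion f₂ (fun m hm => (h m hm.ne').symm) n (Nat.pos_of_ne_zero hn)]

section CyclicOrbits

variable {G X : Type*} [Group G] [MulAction G X] [Finite X]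

theorem card_orbit_zpowers_eq_minimalPeriod (σ : G) (x : X) :
    Nat.card (orbit (zpowers σ) x) = Function.minimalPeriod (σ • ·) x := by
  have := Fintype.ofFinite (orbit (zpowers σ) x)
  rw [Nat.card_eq_fintype_card, minimalPeriod_eq_card]

theorem pow_smul_eq_self_iff_card_orbit_dvd {σ : G} {o : orbitRel.Quotient (zpowers σ) X}
    {x : X} (hx : x ∈ o.orbit) (k : ℕ) : σ ^ k • x = x ↔ Nat.card o.orbit ∣ k := by
  rw [← orbitRel.Quotient.mem_orbit.mp hx, orbitRel.Quotient.orbit_mk,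
    card_orbit_zpowers_eq_minimalPeriod, pow_smul_eq_iff_minimalPeriod_dvd]

theorem card_pow_fixed_eq_sum_orbits (σ : G) (k : ℕ)
    [Fintype (orbitRel.Quotient (zpowers σ) X)] :
    Nat.card {x : X // σ ^ k • x = x} = ∑ o : orbitRel.Quotient (zpowers σ) X,
      if Nat.card o.orbit ∣ k then Nat.card o.orbit else 0 := by
  classical
  have := Fintype.ofFinite X
  rw [Nat.card_eq_fintype_card, Fintype.card_subtype, Finset.card_filter,
    ← Fintype.sum_equiv (selfEquivSigmaOrbits' (zpowers σ) X).symm _ _ (fun _ => rfl),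
    Fintype.sum_sigma]
  refine Fintype.sum_congr _ _ fun o => ?_
  change (∑ y : o.orbit, if σ ^ k • (y : X) = y then 1 else 0) = _
  rw [Finset.sum_congr rfl fun y _ =>
    if_congr (pow_smul_eq_self_iff_card_orbit_dvd y.2 k) rfl rfl]
  split_ifs <;>
    simp only [Finset.sum_const_zero, Finset.sum_const, Finset.card_univ, smul_eq_mul, mul_one,
      Nat.card_eq_fintype_card]

theorem card_pow_fixed_eq_sum_divisors (σ : G) {k : ℕ} (hk : k ≠ 0) :
    Nat.card {x : X // σ ^ k • x = x} = ∑ d ∈ k.divisors,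
      d * Nat.card {o : orbitRel.Quotient (zpowers σ) X // Nat.card o.orbit = d} := by
  classical
  have := Fintype.ofFinite (orbitRel.Quotient (zpowers σ) X)
  calc Nat.card {x : X // σ ^ k • x = x}
      = ∑ o : orbitRel.Quotient (zpowers σ) X, ∑ d ∈ k.divisors,
          if Nat.card o.orbit = d then d else 0 := by
        simp only [card_pow_fixed_eq_sum_orbits, Finset.sum_ite_eq, Nat.mem_divisors, hk,
          Ne, not_false_eq_true, and_true]
    _ = _ := by
        rw [Finset.sum_comm]
        refine Finset.sum_congr rfl fun d _ => ?_
        rw [← Finset.sum_filter, Finset.sum_const, smul_eq_mul, mul_comm, Nat.card_eq_fintype_card,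
          Fintype.card_subtype]

theorem card_orbits_zpowers_eq_of_card_pow_fixed_eq {Y : Type*} [MulAction G Y] [Finite Y]
    (σ : G) (h : ∀ k : ℕ, Nat.card {x : X // σ ^ k • x = x} = Nat.card {y : Y // σ ^ k • y = y})
    {n : ℕ} (hn : n ≠ 0) :
    Nat.card {o : orbitRel.Quotient (zpowers σ) X // Nat.card o.orbit = n} =
      Nat.card {o : orbitRel.Quotient (zpowers σ) Y // Nat.card o.orbit = n} := by
  have hmul := Nat.eq_of_sum_divisors_eq
    (f₁ := fun d : ℕ =>
      ((d * Nat.card {o : orbitRel.Quotient (zpowers σ) X // Nat.card o.orbit = d} : ℕ) : ℤ))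
    (f₂ := fun d : ℕ =>
      ((d * Nat.card {o : orbitRel.Quotient (zpowers σ) Y // Nat.card o.orbit = d} : ℕ) : ℤ))
    (fun k hk => by simp only [← Nat.cast_sum, ← card_pow_fixed_eq_sum_divisors σ hk, h]) hn
  exact Nat.eq_of_mul_eq_mul_left (Nat.pos_of_ne_zero hn) (Nat.cast_injective hmul)

end CyclicOrbits

section Conjugation

variable {G : Type*} [Group G]

theorem card_fixed_quotient_mul_card (H : Subgroup G) (τ : G) :
    Nat.card {x : G ⧸ H // τ • x = x} * Nat.card H = Nat.card {g : G // g⁻¹ * τ * g ∈ H} := by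
  have hfixed : ∀ g : G, τ • (g : G ⧸ H) = g ↔ g⁻¹ * τ * g ∈ H := fun g => by
    rw [MulAction.Quotient.smul_mk, QuotientGroup.eq, smul_eq_mul, ← H.inv_mem_iff]
    group
  rw [mul_comm, ← Nat.card_prod]
  exact Nat.card_congr
    ((QuotientGroup.preimageMkEquivSubgroupProdSet H {x | τ • x = x}).symm.trans
      (Equiv.subtypeEquivRight hfixed))

theorem card_conj_eq_card_centralizer {τ h : G} (hconj : IsConj τ h) :
    Nat.card {g : G // g⁻¹ * τ * g = h} = Nat.card (centralizer {τ}) := by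
  obtain ⟨c, rfl⟩ := isConj_iff.mp hconj
  refine Nat.card_congr ((Equiv.mulRight c).subtypeEquiv fun g => ?_)
  rw [Equiv.coe_mulRight, mem_centralizer_singleton_iff]
  constructor
  · intro hg
    calc g * c * τ = g * (c * τ * c⁻¹) * c := by group
      _ = τ * (g * c) := by rw [← hg]; group
  · intro hgc
    calc g⁻¹ * τ * g = g⁻¹ * (τ * (g * c)) * c⁻¹ := by group
      _ = c * τ * c⁻¹ := by rw [← hgc]; group

theorem card_conj_mem_eq_mul_card_centralizer [Finite G] (H : Subgroup G) (τ : G) :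
    Nat.card {g : G // g⁻¹ * τ * g ∈ H} =
      Nat.card {h : G // h ∈ H ∧ IsConj τ h} * Nat.card (centralizer {τ}) := by
  have := Fintype.ofFinite {h : G // h ∈ H ∧ IsConj τ h}
  have hconj : ∀ g : G, IsConj τ (g⁻¹ * τ * g) := fun g => isConj_iff.mpr ⟨g⁻¹, by group⟩
  rw [← Nat.card_congr (Equiv.sigmaSubtypeFiberEquivSubtype (fun g : G => g⁻¹ * τ * g)
      (q := fun h => h ∈ H ∧ IsConj τ h) fun g => (and_iff_left (hconj g)).symm),
    Nat.card_sigma]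
  simp_rw [fun h : {h : G // h ∈ H ∧ IsConj τ h} => card_conj_eq_card_centralizer h.2.2]
  rw [Finset.sum_const, Finset.card_univ, smul_eq_mul, ← Nat.card_eq_fintype_card]

theorem card_subgroup_eq_sum_conjClasses [Finite G] [Fintype (ConjClasses G)] (H : Subgroup G) :
    Nat.card H = ∑ c : ConjClasses G, Nat.card {h : G // h ∈ H ∧ ConjClasses.mk h = c} := by
  rw [← Nat.card_congr (Equiv.sigmaFiberEquiv fun h : H => ConjClasses.mk (h : G)), Nat.card_sigma]
  exact Finset.sum_congr rfl fun c _ =>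
    Nat.card_congr (Equiv.subtypeSubtypeEquivSubtypeInter (· ∈ H) (ConjClasses.mk · = c))

end Conjugation

section Gassmann

variable {G : Type*} [Group G] [Finite G] {H₁ H₂ : Subgroup G}

theorem card_subgroup_eq_of_gassmann
    (hGass : ∀ g : G, Nat.card {h : G // h ∈ H₁ ∧ IsConj g h}
      = Nat.card {h : G // h ∈ H₂ ∧ IsConj g h}) :
    Nat.card H₁ = Nat.card H₂ := by
  have := Fintype.ofFinite (ConjClasses G)
  rw [card_subgroup_eq_sum_conjClasses, card_subgroup_eq_sum_conjClasses]
  refine Finset.sum_congr rfl fun c _ => ?_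
  obtain ⟨g, rfl⟩ := ConjClasses.mk_surjective c
  simpa only [ConjClasses.mk_eq_mk_iff_isConj, isConj_comm] using hGass g

theorem card_fixed_quotient_eq_of_gassmann
    (hGass : ∀ g : G, Nat.card {h : G // h ∈ H₁ ∧ IsConj g h}
      = Nat.card {h : G // h ∈ H₂ ∧ IsConj g h}) (τ : G) :
    Nat.card {x : G ⧸ H₁ // τ • x = x} = Nat.card {x : G ⧸ H₂ // τ • x = x} := by
  refine Nat.eq_of_mul_eq_mul_right (Nat.card_pos (α := H₁)) ?_
  rw [card_fixed_quotient_mul_card, card_conj_mem_eq_mul_card_centralizer, hGass,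
    ← card_conj_mem_eq_mul_card_centralizer, card_subgroup_eq_of_gassmann hGass,
    card_fixed_quotient_mul_card]

end Gassmann

/-- Let `(G, H₁, H₂)` satisfy the Gassmann condition and let `σ ∈ G`. Then
the permutation of the coset space `H₁\G` induced by `σ` and the permutation of `H₂\G`
induced by `σ` have, for each `n ≥ 1`, the same number of orbits (cycles) of length `n`.
(Orbits of the permutation induced by `σ` are the orbits of the cyclic group `⟨σ⟩` acting
on the coset space.) -/
theorem gassmann_cycle_types_eq (G : Type) [Group G] [Fintype G] (H₁ H₂ : Subgroup G)
    (hGass : ∀ g : G, Nat.card {h : G // h ∈ H₁ ∧ IsConj g h}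
                    = Nat.card {h : G // h ∈ H₂ ∧ IsConj g h})
    (σ : G) :
    ∀ n : ℕ, 1 ≤ n →
      Nat.card {o : MulAction.orbitRel.Quotient (Subgroup.zpowers σ) (G ⧸ H₁) //
          Nat.card o.orbit = n}
        = Nat.card {o : MulAction.orbitRel.Quotient (Subgroup.zpowers σ) (G ⧸ H₂) //
          Nat.card o.orbit = n} := fun _ hn =>
  card_orbits_zpowers_eq_of_card_pow_fixed_eq σ
    (fun k => card_fixed_quotient_eq_of_gassmann hGass (σ ^ k)) (Nat.one_le_iff_ne_zero.mp hn)
end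

section
/- A permutation of a finite set is determined up to conjugacy by the function n ↦ (number of fixed points of its n-th power); concretely, two permutations σ, τ of finite sets of equal cardinality have the same cycle type if and only if for every n ≥ 1, σⁿ and τⁿ have the same number of fixed points. -/
/-!
The fixed points of `σ ^ n` are the points on cycles of `σ` whose length divides `n`, so counting
fixed points as cycles of length `1` (the parts of `σ.partition`), the number of fixed points of
`σ ^ n` is the divisor sum `∑_{d ∣ n} d · c_d(σ)` of the cycle counts. Divisor sums determine the
`c_d` by strong induction on `d` (Möbius inversion), and once `|X| = |Y|` the cycle type
determines the number of `1`-cycles.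
-/

open Finset

namespace Multiset

theorem sum_filter_dvd_eq_sum_divisors (s : Multiset ℕ) {n : ℕ} (hn : n ≠ 0) :
    (s.filter (· ∣ n)).sum = ∑ d ∈ n.divisors, s.count d * d := by
  rw [Finset.sum_multiset_count_of_subset _ n.divisors fun d hd =>
    Nat.mem_divisors.2 ⟨(mem_filter.1 (mem_toFinset.1 hd)).2, hn⟩]
  refine Finset.sum_congr rfl fun d hd => ?_
  rw [count_filter_of_pos (p := (· ∣ n)) (Nat.dvd_of_mem_divisors hd), smul_eq_mul]

theorem eq_of_sum_filter_dvd_eq {s t : Multiset ℕ} (hs : 0 ∉ s) (ht : 0 ∉ t)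
    (h : ∀ n, 0 < n → (s.filter (· ∣ n)).sum = (t.filter (· ∣ n)).sum) : s = t := by
  ext d
  induction d using Nat.strong_induction_on with
  | _ d ih =>
    rcases d.eq_zero_or_pos with rfl | hd
    · rw [count_eq_zero.2 hs, count_eq_zero.2 ht]
    have hsum := h d hd
    rw [sum_filter_dvd_eq_sum_divisors s hd.ne', sum_filter_dvd_eq_sum_divisors t hd.ne',
      ← Nat.cons_self_properDivisors hd.ne', Finset.sum_cons, Finset.sum_cons,
      Finset.sum_congr rfl fun e he => by rw [ih e (Nat.mem_properDivisors.1 he).2]] at hsum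
    exact Nat.eq_of_mul_eq_mul_right hd (Nat.add_right_cancel hsum)

end Multiset

theorem Nat.Partition.zero_notMem_parts {n : ℕ} (p : n.Partition) : 0 ∉ p.parts :=
  fun h => (p.parts_pos h).false

namespace Equiv.Perm

variable {α : Type*} [Fintype α] [DecidableEq α]

theorem card_support_pow (σ : Perm α) (n : ℕ) :
    #(σ ^ n).support = (σ.cycleType.filter (¬ · ∣ n)).sum := by
  induction σ using cycle_induction_on with
  | base_one => simp
  | base_cycles σ hσ =>
    rw [hσ.cycleType, Multiset.filter_singleton, ← hσ.orderOf]
    split_ifs with hdvd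
    · rw [orderOf_dvd_iff_pow_eq_one.1 hdvd]
      simp
    · rw [hσ.support_pow_eq_iff.2 hdvd, Multiset.sum_singleton, hσ.orderOf]
  | induction_disjoint σ π hd _ hσ hπ =>
    rw [hd.commute.mul_pow, (hd.pow_disjoint_pow n n).card_support_mul, hd.cycleType_mul,
      Multiset.filter_add, Multiset.sum_add, hσ, hπ]

theorem natCard_fixed_add_card_support (σ : Perm α) :
    Nat.card {x // σ x = x} + #σ.support = Fintype.card α := by
  rw [Nat.card_eq_fintype_card, Fintype.card_subtype, support,
    card_filter_add_card_filter_not, card_univ]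

theorem natCard_fixed_pow_eq_sum_parts_filter_dvd (σ : Perm α) (n : ℕ) :
    Nat.card {x // (σ ^ n) x = x} = (σ.partition.parts.filter (· ∣ n)).sum := by
  have hfix := natCard_fixed_add_card_support (σ ^ n)
  have hsplit := congrArg Multiset.sum (σ.cycleType.filter_add_not (· ∣ n))
  rw [Multiset.sum_add, sum_cycleType] at hsplit
  rw [card_support_pow] at hfix
  rw [parts_partition, Multiset.filter_add,
    Multiset.filter_eq_self.2 fun a (ha : a ∈ Multiset.replicate _ 1) =>
      Multiset.eq_of_mem_replicate ha ▸ one_dvd n,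
    Multiset.sum_add, Multiset.sum_replicate, smul_eq_mul, mul_one]
  have := σ.support.card_le_univ
  omega

theorem cycleType_eq_iff_parts_partition_eq {β : Type*} [Fintype β] [DecidableEq β]
    (hcard : Fintype.card α = Fintype.card β) {σ : Perm α} {τ : Perm β} :
    σ.cycleType = τ.cycleType ↔ σ.partition.parts = τ.partition.parts := by
  refine ⟨fun h => ?_, fun h => ?_⟩
  · rw [parts_partition, parts_partition, ← sum_cycleType, ← sum_cycleType, h, hcard]
  · rw [← filter_parts_partition_eq_cycleType, ← filter_parts_partition_eq_cycleType, h]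

end Equiv.Perm

open Equiv.Perm in
/-- Two permutations `σ, τ` of finite sets of equal cardinality have the
same cycle type if and only if for every `n ≥ 1`, `σⁿ` and `τⁿ` have the same number of
fixed points. -/
theorem cycleType_eq_iff_fixed_point_counts (X Y : Type)
    [Fintype X] [DecidableEq X] [Fintype Y] [DecidableEq Y]
    (hcard : Fintype.card X = Fintype.card Y)
    (σ : Equiv.Perm X) (τ : Equiv.Perm Y) :
    σ.cycleType = τ.cycleType ↔
      ∀ n : ℕ, 1 ≤ n →
        Nat.card {x : X // (σ ^ n) x = x} = Nat.card {y : Y // (τ ^ n) y = y} := by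
  simp only [cycleType_eq_iff_parts_partition_eq hcard, natCard_fixed_pow_eq_sum_parts_filter_dvd]
  refine ⟨fun h n _ => by rw [h], fun h => ?_⟩
  exact Multiset.eq_of_sum_filter_dvd_eq σ.partition.zero_notMem_parts
    τ.partition.zero_notMem_parts h
end

section
/- Milnor's example: the even unimodular lattices E₈ ⊕ E₈ and E₁₆ in ℝ¹⁶ have the same theta series, i.e., for every even integer 2k, the number of vectors of norm 2k in E₈ ⊕ E₈ equals the number of vectors of norm 2k in E₁₆. -/
/-!
Cut `ℝ¹⁶` into four blocks of four coordinates. The vectors of `ℤ⁴ ∪ (ℤ + ½)⁴` fall into the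
four cosets of `D₄` in its dual, and both lattices are disjoint unions of sixteen products
`C₁ × C₂ × C₃ × C₄` of such cosets: for `E₈ ⊕ E₈` the products `C × C × C' × C'`, for `E₁₆` those
whose factors are all integral or all half-integral and whose coordinate sums add up to an even
number. The three nontrivial cosets are exchanged by reflections (triality), so the number of
vectors of a given norm in a product of cosets only depends on how many factors are `D₄` itself;
in both unions this number is `4` once, `2` six times and `0` nine times.
-/

/-- The E₈-condition on a block `S` of coordinates: all coordinates in `S` are integers,
or all are half-integers, and the coordinate sum over `S` is an even integer. -/
def IsE8Block (x : EuclideanSpace ℝ (Fin 16)) (S : Finset (Fin 16)) : Prop :=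
  ((∀ i ∈ S, ∃ m : ℤ, x i = (m : ℝ)) ∨ (∀ i ∈ S, ∃ m : ℤ, x i = (m : ℝ) + 1/2)) ∧
    ∃ m : ℤ, ∑ i ∈ S, x i = 2 * (m : ℝ)

/-- The lattice `E₈ ⊕ E₈` in `ℝ¹⁶`. -/
def E8E8Set : Set (EuclideanSpace ℝ (Fin 16)) :=
  {x | IsE8Block x (Finset.univ.filter fun i => (i : ℕ) < 8) ∧
       IsE8Block x (Finset.univ.filter fun i => 8 ≤ (i : ℕ))}

/-- The lattice `E₁₆ = D₁₆⁺` in `ℝ¹⁶`. -/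
def E16Set : Set (EuclideanSpace ℝ (Fin 16)) :=
  {x | ((∀ i, ∃ m : ℤ, x i = (m : ℝ)) ∨ (∀ i, ∃ m : ℤ, x i = (m : ℝ) + 1/2)) ∧
       ∃ m : ℤ, ∑ i, x i = 2 * (m : ℝ)}

open Finset Function

def EquivOver {α β γ : Type*} (f : α → γ) (g : β → γ) : Prop :=
  ∃ e : α ≃ β, ∀ a, g (e a) = f a

namespace EquivOver

variable {α β δ γ : Type*} {f : α → γ} {g : β → γ} {h : δ → γ}

theorem refl (f : α → γ) : EquivOver f f := ⟨Equiv.refl α, fun _ => rfl⟩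

theorem symm (hfg : EquivOver f g) : EquivOver g f := by
  obtain ⟨e, he⟩ := hfg
  exact ⟨e.symm, fun b => by rw [← he, e.apply_symm_apply]⟩

theorem trans (hfg : EquivOver f g) (hgh : EquivOver g h) : EquivOver f h := by
  obtain ⟨e, he⟩ := hfg
  obtain ⟨e', he'⟩ := hgh
  exact ⟨e.trans e', fun a => by rw [Equiv.trans_apply, he', he]⟩

theorem of_map_univ_eq [Fintype α] [Fintype β] [DecidableEq γ]
    (hfg : univ.val.map f = univ.val.map g) : EquivOver f g := by
  have hcard (c : γ) : Fintype.card {a // f a = c} = Fintype.card {b // g b = c} := by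
    simpa only [Fintype.card_subtype, Finset.card_def, Finset.filter_val, Multiset.count_map,
      eq_comm] using congrArg (Multiset.count c) hfg
  exact ⟨Equiv.ofFiberEquiv fun c => Fintype.equivOfCardEq (hcard c),
    Equiv.ofFiberEquiv_map _⟩

theorem of_involutive {N : α → γ} {σ : α → α} (hσ : Involutive σ) (hN : ∀ x, N (σ x) = N x)
    {s t : Set α} (hst : Set.MapsTo σ s t) (hts : Set.MapsTo σ t s) :
    EquivOver (fun x : s => N x) (fun x : t => N x) :=
  ⟨{ toFun := hst.restrict σ s t
     invFun := hts.restrict σ t s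
     left_inv := fun x => Subtype.ext (hσ x)
     right_inv := fun x => Subtype.ext (hσ x) }, fun x => hN x⟩

theorem sigma {ι κ : Type*} {α : ι → Type*} {β : κ → Type*} {f : ∀ i, α i → γ}
    {g : ∀ k, β k → γ} (σ : ι ≃ κ) (hfg : ∀ i, EquivOver (f i) (g (σ i))) :
    EquivOver (fun x : Σ i, α i => f x.1 x.2) (fun y : Σ k, β k => g y.1 y.2) := by
  choose e he using hfg
  exact ⟨Equiv.sigmaCongr σ e, fun x => he x.1 x.2⟩

theorem pi [AddCommMonoid γ] {ι : Type*} [Fintype ι] {α β : ι → Type*} {f : ∀ i, α i → γ}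
    {g : ∀ i, β i → γ} (hfg : ∀ i, EquivOver (f i) (g i)) :
    EquivOver (fun x : ∀ i, α i => ∑ i, f i (x i)) (fun y : ∀ i, β i => ∑ i, g i (y i)) := by
  choose e he using hfg
  exact ⟨Equiv.piCongrRight e, fun x => Finset.sum_congr rfl fun i _ => he i (x i)⟩

theorem piCongrLeft [AddCommMonoid γ] {ι κ : Type*} [Fintype ι] [Fintype κ] {β : κ → Type*}
    (σ : ι ≃ κ) (g : ∀ k, β k → γ) :
    EquivOver (fun x : ∀ i, β (σ i) => ∑ i, g (σ i) (x i))
      (fun y : ∀ k, β k => ∑ k, g k (y k)) :=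
  ⟨Equiv.piCongrLeft β σ, fun x => by
    show ∑ k, g k (Equiv.piCongrLeft β σ x k) = _
    rw [← σ.sum_comp]
    simp only [Equiv.piCongrLeft_apply_apply]⟩

theorem natCard_fiber_eq {N : α → γ} {s t : Set α}
    (hst : EquivOver (fun x : s => N x) (fun x : t => N x)) (c : γ) :
    Nat.card {x // x ∈ s ∧ N x = c} = Nat.card {x // x ∈ t ∧ N x = c} := by
  obtain ⟨e, he⟩ := hst
  refine Nat.card_congr ((Equiv.subtypeSubtypeEquivSubtypeInter _ _).symm.trans
    ((e.subtypeEquiv fun x => ?_).trans (Equiv.subtypeSubtypeEquivSubtypeInter _ _)))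
  rw [show N (e x) = N x from he x]

end EquivOver

theorem exists_perm_forall_iff_of_card_eq {ι : Type*} [Fintype ι] {P Q : ι → Prop}
    [DecidablePred P] [DecidablePred Q]
    (h : Fintype.card {i // P i} = Fintype.card {i // Q i}) :
    ∃ σ : Equiv.Perm ι, ∀ i, Q (σ i) ↔ P i := by
  have hc : Fintype.card {i // ¬ P i} = Fintype.card {i // ¬ Q i} := by
    simp only [Fintype.card_subtype_compl, h]
  refine ⟨Equiv.subtypeCongr (Fintype.equivOfCardEq h) (Fintype.equivOfCardEq hc), fun i => ?_⟩
  by_cases hi : P i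
  · simpa [Equiv.subtypeCongr, Equiv.sumCompl_symm_apply_of_pos hi, hi] using
      (Fintype.equivOfCardEq h ⟨i, hi⟩).2
  · simpa [Equiv.subtypeCongr, Equiv.sumCompl_symm_apply_of_neg hi, hi] using
      (Fintype.equivOfCardEq hc ⟨i, hi⟩).2

section CosetProducts

variable {ι K V γ : Type*} [Fintype ι] [AddCommMonoid γ] (C : K → Set V) (N : V → γ)

theorem equivOver_sigma_pi_iUnion (hC : Pairwise (Disjoint on C)) (P : Set (ι → K)) :
    EquivOver (fun x : Σ p : P, ∀ i, C (p.1 i) => ∑ i, N (x.2 i))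
      (fun y : ↥(⋃ p : P, Set.univ.pi fun i => C (p.1 i)) => ∑ i, N (y.1 i)) := by
  have hdisj : Pairwise (Disjoint on fun p : P => Set.univ.pi fun i => C (p.1 i)) := by
    intro p p' hne
    obtain ⟨i, hi⟩ := Function.ne_iff.1 (Subtype.val_injective.ne hne)
    exact Set.disjoint_univ_pi.2 ⟨i, hC hi⟩
  exact ⟨(Equiv.sigmaCongrRight fun p => (Equiv.Set.univPi _).symm).trans
    (Set.unionEqSigmaOfDisjoint hdisj).symm, fun _ => rfl⟩

variable [DecidableEq K] [Zero K]

def zeroCount (p : ι → K) : ℕ := Fintype.card {i // p i = 0}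

theorem equivOver_pi_of_zeroCount_eq
    (hC : ∀ a b, a ≠ 0 → b ≠ 0 → EquivOver (fun v : C a => N v) (fun v : C b => N v))
    {p q : ι → K} (hpq : zeroCount p = zeroCount q) :
    EquivOver (fun y : ∀ i, C (p i) => ∑ i, N (y i)) (fun y : ∀ i, C (q i) => ∑ i, N (y i)) := by
  obtain ⟨σ, hσ⟩ := exists_perm_forall_iff_of_card_eq hpq
  refine (EquivOver.pi (f := fun i (v : C (p i)) => N v) (g := fun i (v : C (q (σ i))) => N v)
    fun i => ?_).trans (EquivOver.piCongrLeft σ fun i (v : C (q i)) => N v)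
  by_cases hi : p i = 0
  · rw [hi, (hσ i).2 hi]
    exact .refl _
  · exact hC _ _ hi (mt (hσ i).1 hi)

theorem equivOver_iUnion_pi_of_map_zeroCount_eq (hdisj : Pairwise (Disjoint on C))
    (hC : ∀ a b, a ≠ 0 → b ≠ 0 → EquivOver (fun v : C a => N v) (fun v : C b => N v))
    {P Q : Set (ι → K)} [Fintype P] [Fintype Q]
    (hPQ : univ.val.map (fun p : P => zeroCount p.1) = univ.val.map fun q : Q => zeroCount q.1) :
    EquivOver (fun y : ↥(⋃ p : P, Set.univ.pi fun i => C (p.1 i)) => ∑ i, N (y.1 i))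
      (fun y : ↥(⋃ q : Q, Set.univ.pi fun i => C (q.1 i)) => ∑ i, N (y.1 i)) := by
  obtain ⟨σ, hσ⟩ := EquivOver.of_map_univ_eq hPQ
  exact (equivOver_sigma_pi_iUnion C N hdisj P).symm.trans <|
    (EquivOver.sigma σ (f := fun p (y : ∀ i, C (p.1 i)) => ∑ i, N (y i))
      (g := fun q (y : ∀ i, C (q.1 i)) => ∑ i, N (y i))
      fun p => equivOver_pi_of_zeroCount_eq C N hC (hσ p).symm).trans
      (equivOver_sigma_pi_iUnion C N hdisj Q)

end CosetProducts

/-- The four cosets of `D₄` in its dual lattice; `D4Coset 0` is `D₄` itself. -/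
def D4Coset (a : ZMod 2 × ZMod 2) : Set (EuclideanSpace ℝ (Fin 4)) :=
  {v | ∃ m : Fin 4 → ℤ, (∀ j, v j = m j + a.1.val / 2) ∧ ((∑ j, m j : ℤ) : ZMod 2) = a.2}

theorem exists_sum_eq_of_mem_d4Coset {a : ZMod 2 × ZMod 2} {v : EuclideanSpace ℝ (Fin 4)}
    (hv : v ∈ D4Coset a) : ∃ n : ℤ, ∑ j, v j = n ∧ (n : ZMod 2) = a.2 := by
  obtain ⟨m, hm, hpar⟩ := hv
  refine ⟨∑ j, m j + 2 * a.1.val, ?_, ?_⟩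
  · simp only [hm, Fin.sum_univ_four]
    push_cast
    ring
  · simp [← hpar, show (2 : ZMod 2) = 0 from rfl]

theorem eq_of_mem_d4Coset {a b : ZMod 2 × ZMod 2} {v : EuclideanSpace ℝ (Fin 4)}
    (ha : v ∈ D4Coset a) (hb : v ∈ D4Coset b) : a = b := by
  obtain ⟨m, hm, hpa⟩ := ha
  obtain ⟨m', hm', hpb⟩ := hb
  have hdiff (j : Fin 4) : 2 * (m j - m' j) = (b.1.val : ℤ) - a.1.val := by
    have h := (hm j).symm.trans (hm' j)
    have : ((2 * (m j - m' j) : ℤ) : ℝ) = ((b.1.val - a.1.val : ℤ) : ℝ) := by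
      push_cast
      linarith
    exact_mod_cast this
  have h1 : a.1 = b.1 := by
    have := hdiff 0
    have := a.1.val_lt
    have := b.1.val_lt
    exact ZMod.val_injective _ (by omega)
  have hmm : m = m' := by
    funext j
    have := hdiff j
    rw [h1] at this
    omega
  exact Prod.ext h1 (hpa.symm.trans (hmm ▸ hpb))

theorem pairwise_disjoint_d4Coset : Pairwise (Disjoint on D4Coset) :=
  fun _ _ hab => Set.disjoint_left.2 fun _ ha hb => hab (eq_of_mem_d4Coset ha hb)

theorem exists_mem_d4Coset_iff (h : ZMod 2) (v : EuclideanSpace ℝ (Fin 4)) :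
    (∃ o, v ∈ D4Coset (h, o)) ↔ ∀ j, ∃ m : ℤ, v j = m + h.val / 2 := by
  constructor
  · rintro ⟨o, m, hm, -⟩ j
    exact ⟨m j, hm j⟩
  · intro hv
    choose m hm using hv
    exact ⟨_, m, hm, rfl⟩

theorem reflection_orthogonal_singleton_apply {E : Type*} [NormedAddCommGroup E]
    [InnerProductSpace ℝ E] (u v : E) :
    (ℝ ∙ u)ᗮ.reflection v = v - (2 * inner ℝ u v / ‖u‖ ^ 2) • u := by
  rw [Submodule.reflection_orthogonal_apply, Submodule.reflection_singleton_apply]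
  module

theorem equivOver_of_reflection {E : Type*} [NormedAddCommGroup E] [InnerProductSpace ℝ E]
    (u : E) {s t : Set E} (hst : Set.MapsTo (ℝ ∙ u)ᗮ.reflection s t)
    (hts : Set.MapsTo (ℝ ∙ u)ᗮ.reflection t s) :
    EquivOver (fun v : s => ‖(v : E)‖ ^ 2) (fun v : t => ‖(v : E)‖ ^ 2) :=
  EquivOver.of_involutive (N := fun v : E => ‖v‖ ^ 2) (Submodule.reflection_involutive _)
    (fun v => by rw [LinearIsometryEquiv.norm_map]) hst hts

theorem reflection_single_zero_apply (v : EuclideanSpace ℝ (Fin 4)) :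
    (ℝ ∙ EuclideanSpace.single 0 1)ᗮ.reflection v = !₂[-v 0, v 1, v 2, v 3] := by
  rw [reflection_orthogonal_singleton_apply]
  ext j
  fin_cases j <;> simp [EuclideanSpace.inner_single_left]
  ring

theorem reflection_single_zero_mapsTo (o : ZMod 2) :
    Set.MapsTo (ℝ ∙ EuclideanSpace.single 0 1)ᗮ.reflection (D4Coset (1, o))
      (D4Coset (1, o + 1)) := by
  rintro v ⟨m, hm, hpar⟩
  refine ⟨![-m 0 - 1, m 1, m 2, m 3], fun j => ?_, ?_⟩
  · rw [reflection_single_zero_apply]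
    fin_cases j <;> simp [hm, -ZMod.natCast_val, ZMod.val_one]
    ring
  · change _ = o at hpar
    subst hpar
    push_cast [Fin.sum_univ_four]
    grind

local notation "ρ" => (!₂[1, -1, -1, -1] : EuclideanSpace ℝ (Fin 4))

theorem reflection_rho_apply (v : EuclideanSpace ℝ (Fin 4)) :
    (ℝ ∙ ρ)ᗮ.reflection v =
      let t := (v 0 - v 1 - v 2 - v 3) / 2
      !₂[v 0 - t, v 1 + t, v 2 + t, v 3 + t] := by
  rw [reflection_orthogonal_singleton_apply]
  ext j
  fin_cases j <;> simp [EuclideanSpace.inner_eq_star_dotProduct, dotProduct, Fin.sum_univ_four,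
    EuclideanSpace.norm_sq_eq] <;> ring

theorem reflection_rho_mapsTo_int_odd :
    Set.MapsTo (ℝ ∙ ρ)ᗮ.reflection (D4Coset (0, 1)) (D4Coset (1, 0)) := by
  rintro v ⟨m, hm, hpar⟩
  obtain ⟨k, hk⟩ := ZMod.intCast_eq_one_iff_odd.1 hpar
  rw [Fin.sum_univ_four] at hk
  have hkR : (m 0 : ℝ) + m 1 + m 2 + m 3 = 2 * k + 1 := by exact_mod_cast hk
  set n := k - m 1 - m 2 - m 3
  refine ⟨![m 0 - n - 1, m 1 + n, m 2 + n, m 3 + n], fun j => ?_, ?_⟩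
  · rw [reflection_rho_apply]
    fin_cases j <;> simp [hm, n, -ZMod.natCast_val, ZMod.val_one] <;> linarith
  · rw [ZMod.intCast_eq_zero_iff_even, Int.even_iff]
    simp [Fin.sum_univ_four, n]
    omega

theorem reflection_rho_mapsTo_half_even :
    Set.MapsTo (ℝ ∙ ρ)ᗮ.reflection (D4Coset (1, 0)) (D4Coset (0, 1)) := by
  rintro v ⟨m, hm, hpar⟩
  obtain ⟨k, hk⟩ := ZMod.intCast_eq_zero_iff_even.1 hpar
  rw [Fin.sum_univ_four] at hk
  have hkR : (m 0 : ℝ) + m 1 + m 2 + m 3 = k + k := by exact_mod_cast hk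
  set n := k - m 1 - m 2 - m 3 - 1
  refine ⟨![m 0 - n, m 1 + n + 1, m 2 + n + 1, m 3 + n + 1], fun j => ?_, ?_⟩
  · rw [reflection_rho_apply]
    fin_cases j <;> simp [hm, n, -ZMod.natCast_val, ZMod.val_one] <;> linarith
  · rw [ZMod.intCast_eq_one_iff_odd, Int.odd_iff]
    simp [Fin.sum_univ_four, n]
    omega

theorem equivOver_d4Coset {a b : ZMod 2 × ZMod 2} (ha : a ≠ 0) (hb : b ≠ 0) :
    EquivOver (fun v : D4Coset a => ‖(v : EuclideanSpace ℝ (Fin 4))‖ ^ 2)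
      (fun v : D4Coset b => ‖(v : EuclideanSpace ℝ (Fin 4))‖ ^ 2) := by
  suffices h : ∀ a, a ≠ 0 →
      EquivOver (fun v : D4Coset a => ‖(v : EuclideanSpace ℝ (Fin 4))‖ ^ 2)
        (fun v : D4Coset (0, 1) => ‖(v : EuclideanSpace ℝ (Fin 4))‖ ^ 2) from
    (h a ha).trans (h b hb).symm
  have hρ := equivOver_of_reflection _ reflection_rho_mapsTo_int_odd
    reflection_rho_mapsTo_half_even
  have hneg := equivOver_of_reflection _ (reflection_single_zero_mapsTo 1)
    (reflection_single_zero_mapsTo 0 : Set.MapsTo _ (D4Coset (1, 0)) (D4Coset (1, 1)))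
  intro a ha
  fin_cases a
  · exact absurd rfl ha
  · exact .refl _
  · exact hρ.symm
  · exact hneg.trans hρ.symm

/-- The condition defining `D₄ₙ⁺` (such as `E₈` and `E₁₆`), for a vector of `ℝ⁴ⁿ` cut into
`n` blocks of four coordinates. -/
def IsDPlus {ι : Type*} [Fintype ι] (y : ι → EuclideanSpace ℝ (Fin 4)) : Prop :=
  ((∀ t j, ∃ m : ℤ, y t j = m) ∨ (∀ t j, ∃ m : ℤ, y t j = m + 1 / 2)) ∧
    ∃ m : ℤ, ∑ t, ∑ j, y t j = 2 * m

def IsDPlusPattern {ι : Type*} [Fintype ι] (p : ι → ZMod 2 × ZMod 2) : Prop :=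
  (∃ h, ∀ t, (p t).1 = h) ∧ ∑ t, (p t).2 = 0

instance {ι : Type*} [Fintype ι] : DecidablePred (@IsDPlusPattern ι _) :=
  fun p => inferInstanceAs (Decidable ((∃ h, ∀ t, (p t).1 = h) ∧ ∑ t, (p t).2 = 0))

theorem exists_intCast_eq_two_mul_iff (n : ℤ) :
    (∃ m : ℤ, (n : ℝ) = 2 * m) ↔ (n : ZMod 2) = 0 := by
  rw [ZMod.intCast_eq_zero_iff_even, even_iff_exists_two_mul]
  exact exists_congr fun m => by norm_cast

section DPlus

variable {ι : Type*} [Fintype ι]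

theorem exists_sum_sum_eq_two_mul_iff {p : ι → ZMod 2 × ZMod 2}
    {y : ι → EuclideanSpace ℝ (Fin 4)} (hy : ∀ t, y t ∈ D4Coset (p t)) :
    (∃ m : ℤ, ∑ t, ∑ j, y t j = 2 * m) ↔ ∑ t, (p t).2 = 0 := by
  choose n hn hpar using fun t => exists_sum_eq_of_mem_d4Coset (hy t)
  have hsum : ∑ t, ∑ j, y t j = ((∑ t, n t : ℤ) : ℝ) := by
    push_cast
    exact sum_congr rfl fun t _ => hn t
  rw [hsum, exists_intCast_eq_two_mul_iff]
  push_cast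
  simp only [hpar]

theorem isDPlus_iff (y : ι → EuclideanSpace ℝ (Fin 4)) :
    IsDPlus y ↔ ∃ p, IsDPlusPattern p ∧ ∀ t, y t ∈ D4Coset (p t) := by
  have hcoord : ((∀ t j, ∃ m : ℤ, y t j = m) ∨ (∀ t j, ∃ m : ℤ, y t j = m + 1 / 2)) ↔
      ∃ h : ZMod 2, ∀ t, ∃ o, y t ∈ D4Coset (h, o) := by
    simp only [exists_mem_d4Coset_iff]
    constructor
    · rintro (hy | hy)
      · exact ⟨0, by simpa using hy⟩
      · exact ⟨1, by simpa [-ZMod.natCast_val, ZMod.val_one] using hy⟩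
    · rintro ⟨h, hy⟩
      obtain rfl | rfl := (by decide : ∀ h : ZMod 2, h = 0 ∨ h = 1) h
      · left
        simpa using hy
      · right
        simpa [-ZMod.natCast_val, ZMod.val_one] using hy
  constructor
  · rintro ⟨hc, hm⟩
    obtain ⟨h, hh⟩ := hcoord.1 hc
    choose o ho using hh
    exact ⟨fun t => (h, o t), ⟨⟨h, fun _ => rfl⟩, (exists_sum_sum_eq_two_mul_iff ho).1 hm⟩, ho⟩
  · rintro ⟨p, ⟨⟨h, hh⟩, hsum⟩, hy⟩
    exact ⟨hcoord.2 ⟨h, fun t => ⟨(p t).2, hh t ▸ hy t⟩⟩,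
      (exists_sum_sum_eq_two_mul_iff hy).2 hsum⟩

theorem setOf_isDPlus_eq :
    {y : ι → EuclideanSpace ℝ (Fin 4) | IsDPlus y} =
      ⋃ p : {p : ι → ZMod 2 × ZMod 2 | IsDPlusPattern p},
        Set.univ.pi fun t => D4Coset (p.1 t) := by
  ext y
  simp [isDPlus_iff]

theorem setOf_forall_isDPlus_eq {κ : Type*} :
    {y : κ × ι → EuclideanSpace ℝ (Fin 4) | ∀ r, IsDPlus fun s => y (r, s)} =
      ⋃ p : {p : κ × ι → ZMod 2 × ZMod 2 | ∀ r, IsDPlusPattern fun s => p (r, s)},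
        Set.univ.pi fun t => D4Coset (p.1 t) := by
  ext y
  simp only [Set.mem_ofPred_eq, isDPlus_iff, Set.mem_iUnion, Set.mem_univ_pi, Subtype.exists]
  constructor
  · intro h
    choose p hp hy using h
    exact ⟨fun t => p t.1 t.2, hp, fun t => hy t.1 t.2⟩
  · rintro ⟨p, hp, hy⟩ r
    exact ⟨fun s => p (r, s), hp r, fun s => hy (r, s)⟩

end DPlus

theorem equivOver_forall_isDPlus_isDPlus :
    EquivOver
      (fun y : {y : Fin 2 × Fin 2 → EuclideanSpace ℝ (Fin 4) | ∀ r, IsDPlus fun s => y (r, s)} =>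
        ∑ t, ‖y.1 t‖ ^ 2)
      (fun y : {y : Fin 2 × Fin 2 → EuclideanSpace ℝ (Fin 4) | IsDPlus y} =>
        ∑ t, ‖y.1 t‖ ^ 2) := by
  rw [setOf_forall_isDPlus_eq, setOf_isDPlus_eq]
  -- Among the patterns on either side, `zeroCount` takes the value 4 once, 2 six times and
  -- 0 nine times.
  exact equivOver_iUnion_pi_of_map_zeroCount_eq D4Coset (fun v => ‖v‖ ^ 2)
    pairwise_disjoint_d4Coset (fun _ _ => equivOver_d4Coset) (by decide +kernel)

/-- Coordinate `j + 4 * (s + 2 * r)` of `ℝ¹⁶` goes to coordinate `j` of block `(r, s)`, so the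
two halves of `E₈ ⊕ E₈` are `r = 0` and `r = 1`. -/
def blockIndex : (Fin 2 × Fin 2) × Fin 4 ≃ Fin 16 :=
  (finProdFinEquiv.prodCongr (Equiv.refl _)).trans finProdFinEquiv

def toBlocks : EuclideanSpace ℝ (Fin 16) ≃ (Fin 2 × Fin 2 → EuclideanSpace ℝ (Fin 4)) :=
  (WithLp.equiv 2 _).trans <| (blockIndex.arrowCongr (Equiv.refl ℝ)).symm.trans <|
    (Equiv.curry _ _ _).trans <| Equiv.piCongrRight fun _ => (WithLp.equiv 2 _).symm

theorem toBlocks_apply (x : EuclideanSpace ℝ (Fin 16)) (t : Fin 2 × Fin 2) (j : Fin 4) :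
    toBlocks x t j = x (blockIndex (t, j)) := rfl

theorem blockIndex_val (t : Fin 2 × Fin 2) (j : Fin 4) :
    (blockIndex (t, j) : ℕ) = j + 4 * (t.2 + 2 * t.1) := by
  simp [blockIndex, finProdFinEquiv]

theorem sum_mul_self_eq_sum_norm_sq_toBlocks (x : EuclideanSpace ℝ (Fin 16)) :
    ∑ i, x i * x i = ∑ t, ‖toBlocks x t‖ ^ 2 := by
  simp only [EuclideanSpace.norm_sq_eq, Real.norm_eq_abs, sq_abs, toBlocks_apply]
  rw [← blockIndex.sum_comp, Fintype.sum_prod_type]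
  simp only [sq]

theorem mem_e16Set_iff (x : EuclideanSpace ℝ (Fin 16)) : x ∈ E16Set ↔ IsDPlus (toBlocks x) := by
  simp only [E16Set, IsDPlus, Set.mem_ofPred_eq, toBlocks_apply, ← blockIndex.forall_congr_right,
    Prod.forall, ← blockIndex.sum_comp, Fintype.sum_prod_type]

theorem isE8Block_iff (x : EuclideanSpace ℝ (Fin 16)) (r : Fin 2) (S : Finset (Fin 16))
    (hS : ∀ t j, blockIndex (t, j) ∈ S ↔ t.1 = r) :
    IsE8Block x S ↔ IsDPlus fun s => toBlocks x (r, s) := by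
  have hsum : ∑ i ∈ S, x i = ∑ s, ∑ j, toBlocks x (r, s) j := by
    rw [← Finset.univ_inter S, ← Finset.sum_ite_mem, ← blockIndex.sum_comp,
      Fintype.sum_prod_type, Fintype.sum_prod_type]
    simp [hS, toBlocks_apply]
  have hall (P : ℝ → Prop) : (∀ i ∈ S, P (x i)) ↔ ∀ s j, P (toBlocks x (r, s) j) := by
    refine ⟨fun h s j => h _ ((hS _ _).2 rfl), fun h i hi => ?_⟩
    obtain ⟨⟨⟨r', s⟩, j⟩, rfl⟩ := blockIndex.surjective i
    obtain rfl : r' = r := (hS _ _).1 hi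
    exact h s j
  rw [IsE8Block, IsDPlus, hsum, hall fun v => ∃ m : ℤ, v = m,
    hall fun v => ∃ m : ℤ, v = m + 1 / 2]

theorem mem_e8e8Set_iff (x : EuclideanSpace ℝ (Fin 16)) :
    x ∈ E8E8Set ↔ ∀ r, IsDPlus fun s => toBlocks x (r, s) := by
  rw [E8E8Set, Set.mem_ofPred_eq, Fin.forall_fin_two]
  refine and_congr (isE8Block_iff x 0 _ fun t j => ?_) (isE8Block_iff x 1 _ fun t j => ?_)
  all_goals
    simp only [Finset.mem_filter, Finset.mem_univ, true_and, blockIndex_val, Fin.ext_iff]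
    have := t.1.isLt
    have := t.2.isLt
    have := j.isLt
    simp
    omega

theorem equivOver_toBlocks {s : Set (EuclideanSpace ℝ (Fin 16))}
    {A : Set (Fin 2 × Fin 2 → EuclideanSpace ℝ (Fin 4))} (h : ∀ x, x ∈ s ↔ toBlocks x ∈ A) :
    EquivOver (fun x : s => ∑ i, x.1 i * x.1 i)
      (fun y : A => ∑ t, ‖y.1 t‖ ^ 2) :=
  ⟨toBlocks.subtypeEquiv h, fun x => (sum_mul_self_eq_sum_norm_sq_toBlocks x).symm⟩

/-- Milnor's example: the even unimodular lattices `E₈ ⊕ E₈` and `E₁₆` in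
`ℝ¹⁶` have the same theta series: for every even integer `2k`, the number of vectors of
norm `2k` in `E₈ ⊕ E₈` equals the number of vectors of norm `2k` in `E₁₆`. -/
theorem e8e8_e16_same_theta (k : ℕ) :
    Nat.card {x : EuclideanSpace ℝ (Fin 16) //
        x ∈ E8E8Set ∧ ∑ i, x i * x i = 2 * (k : ℝ)}
      = Nat.card {x : EuclideanSpace ℝ (Fin 16) //
        x ∈ E16Set ∧ ∑ i, x i * x i = 2 * (k : ℝ)} :=
  ((equivOver_toBlocks mem_e8e8Set_iff).trans <| equivOver_forall_isDPlus_isDPlus.trans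
    (equivOver_toBlocks mem_e16Set_iff).symm).natCard_fiber_eq _
end

section
/- If two subgroups H₁, H₂ of a finite group G have equivalent permutation representations ℂ[H₁\G] ≅ ℂ[H₂\G], then the numbers of orbits of H₁ and H₂ on any finite G-set X are equal. -/
/-!
The trace of the operator `f ↦ f ∘ (g⁻¹ • ·)` on `ℂ[Y]` is the number of fixed points of `g`
on `Y`, so an intertwining isomorphism `ℂ[G/H₁] ≅ ℂ[G/H₂]` gives
`|Fix_{G/H₁}(g)| = |Fix_{G/H₂}(g)|` for every `g`. On the other hand
`∑_g |Fix_{G/H}(g)| · |Fix_X(g)| = |G| · #(H-orbits on X)`: regrouping the sum by the fixed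
point of `G/H`, whose stabilizer is a conjugate of `H`, leaves `[G : H]` copies of
`∑_{h ∈ H} |Fix_X(h)|`, which is Burnside's lemma for `H` acting on `X`.
-/

open MulAction Function LinearMap

theorem LinearMap.trace_funLeft_s19 {R Y : Type*} [CommRing R] [Fintype Y] (f : Y → Y) :
    trace R (Y → R) (funLeft R R f) = Nat.card (fixedPoints f) := by
  classical
  rw [trace_eq_matrix_trace R (Pi.basisFun R Y), Matrix.trace, Nat.card_eq_fintype_card,
    Fintype.card_subtype, Finset.natCast_card_filter]
  refine Finset.sum_congr rfl fun y _ => ?_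
  simp [Pi.single_apply, IsFixedPt]

theorem card_fixedPoints_eq_of_intertwines_funLeft {R Y₁ Y₂ : Type*} [CommRing R] [CharZero R]
    [Fintype Y₁] [Fintype Y₂] (e : (Y₁ → R) ≃ₗ[R] (Y₂ → R)) {f₁ : Y₁ → Y₁} {f₂ : Y₂ → Y₂}
    (he : e ∘ₗ funLeft R R f₁ = funLeft R R f₂ ∘ₗ e) :
    Nat.card (fixedPoints f₁) = Nat.card (fixedPoints f₂) := by
  have hconj : e.conj (funLeft R R f₁) = funLeft R R f₂ := by
    rw [LinearEquiv.conj_apply, he, LinearMap.comp_assoc, LinearEquiv.comp_coe,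
      LinearEquiv.symm_trans_self, LinearEquiv.refl_toLinearMap, LinearMap.comp_id]
  have htrace := trace_conj' (funLeft R R f₁) e
  rw [hconj, trace_funLeft_s19, trace_funLeft_s19] at htrace
  exact_mod_cast htrace.symm

namespace MulAction

section ClassFunction

variable {G Y M : Type*} [Group G] [MulAction G Y] [AddCommMonoid M]

theorem sum_card_fixedBy_smul_eq_sum_stabilizer [Fintype G] [Fintype Y] [DecidableEq Y]
    (φ : G → M) : ∑ g, Nat.card (fixedBy Y g) • φ g = ∑ y : Y, ∑ g : stabilizer G y, φ g := by
  calc ∑ g, Nat.card (fixedBy Y g) • φ g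
      = ∑ g, ∑ y, if g • y = y then φ g else 0 := by
        refine Finset.sum_congr rfl fun g _ => ?_
        rw [Finset.sum_ite, Finset.sum_const_zero, add_zero, Finset.sum_const,
          Nat.card_eq_fintype_card, Fintype.card_subtype]
        rfl
    _ = ∑ y : Y, ∑ g, if g ∈ stabilizer G y then φ g else 0 := Finset.sum_comm
    _ = ∑ y : Y, ∑ g : stabilizer G y, φ g := by
        refine Finset.sum_congr rfl fun y _ => ?_
        rw [← Finset.sum_filter]
        exact Finset.sum_subtype _ (by simp) φ

theorem sum_stabilizer_smul_eq {φ : G → M} (hφ : ∀ a g, φ (a * g * a⁻¹) = φ g) (a : G) (y : Y)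
    [Fintype (stabilizer G y)] [Fintype (stabilizer G (a • y))] :
    ∑ g : stabilizer G (a • y), φ g = ∑ g : stabilizer G y, φ g :=
  (Fintype.sum_equiv (stabilizerEquivStabilizer rfl).toEquiv _ _ fun x => by
    simp [stabilizerEquivStabilizer_apply, hφ]).symm

theorem sum_card_fixedBy_quotient_smul [Fintype G] (H : Subgroup G) [DecidablePred (· ∈ H)]
    {φ : G → M} (hφ : ∀ a g, φ (a * g * a⁻¹) = φ g) :
    ∑ g, Nat.card (fixedBy (G ⧸ H) g) • φ g = H.index • ∑ h : H, φ h := by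
  classical
  have hstab (y : G ⧸ H) : ∑ g : stabilizer G y, φ g = ∑ h : H, φ h := by
    obtain ⟨a, rfl⟩ := QuotientGroup.mk_surjective y
    have ha : (a : G ⧸ H) = a • ((1 : G) : G ⧸ H) := by simp
    rw [ha, sum_stabilizer_smul_eq hφ]
    exact Fintype.sum_equiv (MulEquiv.subgroupCongr (stabilizer_quotient H)).toEquiv _ _
      fun _ => rfl
  rw [sum_card_fixedBy_smul_eq_sum_stabilizer, Fintype.sum_congr _ _ hstab, Finset.sum_const,
    Finset.card_univ, H.index_eq_card, Nat.card_eq_fintype_card]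

end ClassFunction

theorem sum_card_fixedBy_quotient_mul_card_fixedBy {G X : Type*} [Group G] [Fintype G]
    [MulAction G X] [Finite X] (H : Subgroup G) :
    ∑ g : G, Nat.card (fixedBy (G ⧸ H) g) * Nat.card (fixedBy X g)
      = Nat.card (orbitRel.Quotient H X) * Nat.card G := by
  classical
  have := Fintype.ofFinite X
  have hclass (a g : G) : Nat.card (fixedBy X (a * g * a⁻¹)) = Nat.card (fixedBy X g) := by
    rw [← smul_fixedBy]
    exact Nat.card_image_of_injective (MulAction.injective a) _
  have burnside : ∑ h : H, Nat.card (fixedBy X (h : G))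
      = Nat.card (orbitRel.Quotient H X) * Nat.card H := by
    have := sum_card_fixedBy_eq_card_orbits_mul_card_group H X
    simp only [← Nat.card_eq_fintype_card] at this
    exact this
  calc ∑ g, Nat.card (fixedBy (G ⧸ H) g) * Nat.card (fixedBy X g)
      = H.index * ∑ h : H, Nat.card (fixedBy X (h : G)) :=
        sum_card_fixedBy_quotient_smul H hclass
    _ = Nat.card (orbitRel.Quotient H X) * Nat.card G := by
        rw [burnside, mul_left_comm, H.index_mul_card]

end MulAction

/-- If two subgroups `H₁, H₂` of a finite group `G` have equivalent
permutation representations `ℂ[H₁\G] ≅ ℂ[H₂\G]`, then the numbers of orbits of `H₁` and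
`H₂` on any finite `G`-set `X` are equal. -/
theorem perm_rep_equiv_orbit_counts (G : Type) [Group G] [Fintype G]
    (H₁ H₂ : Subgroup G)
    (hrepequiv : ∃ e : (G ⧸ H₁ → ℂ) ≃ₗ[ℂ] (G ⧸ H₂ → ℂ),
      ∀ (g : G) (f : G ⧸ H₁ → ℂ),
        e (fun x => f (g⁻¹ • x)) = fun x => e f (g⁻¹ • x)) :
    ∀ (X : Type) [Fintype X] [MulAction G X],
      Nat.card (MulAction.orbitRel.Quotient H₁ X)
        = Nat.card (MulAction.orbitRel.Quotient H₂ X) := by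
  intro X _ _
  classical
  obtain ⟨e, he⟩ := hrepequiv
  have hfix (g : G) : Nat.card (fixedBy (G ⧸ H₁) g) = Nat.card (fixedBy (G ⧸ H₂) g) := by
    have : Nat.card (fixedBy (G ⧸ H₁) g⁻¹) = Nat.card (fixedBy (G ⧸ H₂) g⁻¹) :=
      card_fixedPoints_eq_of_intertwines_funLeft e (LinearMap.ext (he g))
    rwa [fixedBy_inv, fixedBy_inv] at this
  have hcount : Nat.card (orbitRel.Quotient H₁ X) * Nat.card G
      = Nat.card (orbitRel.Quotient H₂ X) * Nat.card G := by
    rw [← sum_card_fixedBy_quotient_mul_card_fixedBy,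
      ← sum_card_fixedBy_quotient_mul_card_fixedBy]
    simp only [hfix]
  exact Nat.eq_of_mul_eq_mul_right Nat.card_pos hcount
end
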